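/- arXiv:quant-ph/0405098 — 8 statements merged into one kernel-verified Lean document; each statement's English description precedes it below -/
import Mathlib

section
/- Let H(s) be the (L+1)×(L+1) real symmetric matrix H(s) = (1-s)·D + s·A, where D = diag(0,1,1,...,1) and A is the tridiagonal matrix with diagonal (1/2, 1, 1, ..., 1, 1/2) and all off-diagonal entries on the first sub/super-diagonal equal to -1/2. Then for all 0 ≤ s < 1/3, H(s) has exactly one eigenvalue smaller than 1/3, all other eigenvalues are larger than 2/3, and hence the spectral gap of H(s) is at least 1/3. -/
/-!
On the coordinate hyperplane `v 0 = 0` the matrix `D` acts as the identity, and `A` is positive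
semidefinite because it is symmetric and weakly diagonally dominant (the quadratic-form version of
Gershgorin's theorem). Hence `vᵀ H(s) v ≥ (1 - s) ‖v‖²` there. Any two orthonormal eigenvectors
span a vector of this hyperplane, so at most one eigenvalue lies below `1 - s > 2/3`; and the least
eigenvalue is at most the diagonal entry `H(s) 0 0 = s / 2 < 1/3`.
-/

open Matrix Finset

namespace Matrix.IsHermitian
variable {n : Type*} [Fintype n] [DecidableEq n] {H : Matrix n n ℝ} (hH : H.IsHermitian)

theorem dotProduct_eigenvectorBasis (i j : n) :
    ⇑(hH.eigenvectorBasis i) ⬝ᵥ ⇑(hH.eigenvectorBasis j) = if i = j then 1 else 0 := by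
  rw [← orthonormal_iff_ite.1 hH.eigenvectorBasis.orthonormal i j,
    EuclideanSpace.inner_eq_star_dotProduct, dotProduct_comm]
  rfl

theorem sum_dotProduct_smul_eigenvectorBasis (v : n → ℝ) :
    ∑ i, (⇑(hH.eigenvectorBasis i) ⬝ᵥ v) • ⇑(hH.eigenvectorBasis i) = v := by
  simpa [EuclideanSpace.inner_eq_star_dotProduct, dotProduct_comm] using
    congrArg WithLp.ofLp (hH.eigenvectorBasis.sum_repr' (WithLp.toLp 2 v))

theorem dotProduct_self_eq_sum_sq (v : n → ℝ) :
    v ⬝ᵥ v = ∑ i, (⇑(hH.eigenvectorBasis i) ⬝ᵥ v) ^ 2 := by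
  calc v ⬝ᵥ v
      = v ⬝ᵥ ∑ i, (⇑(hH.eigenvectorBasis i) ⬝ᵥ v) • ⇑(hH.eigenvectorBasis i) := by
        rw [hH.sum_dotProduct_smul_eigenvectorBasis]
    _ = _ := by
        simp only [dotProduct_sum, dotProduct_smul, smul_eq_mul]
        exact sum_congr rfl fun i _ => by rw [dotProduct_comm v]; ring

theorem dotProduct_mulVec_eq_sum_eigenvalues_mul_sq (v : n → ℝ) :
    v ⬝ᵥ H *ᵥ v = ∑ i, hH.eigenvalues i * (⇑(hH.eigenvectorBasis i) ⬝ᵥ v) ^ 2 := by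
  calc v ⬝ᵥ H *ᵥ v
      = v ⬝ᵥ H *ᵥ ∑ i, (⇑(hH.eigenvectorBasis i) ⬝ᵥ v) • ⇑(hH.eigenvectorBasis i) := by
        rw [hH.sum_dotProduct_smul_eigenvectorBasis]
    _ = _ := by
        simp only [mulVec_sum, mulVec_smul, mulVec_eigenvectorBasis, dotProduct_sum,
          dotProduct_smul, smul_eq_mul]
        exact sum_congr rfl fun i _ => by rw [dotProduct_comm v]; ring

theorem exists_eigenvalues_mul_le [Nonempty n] (v : n → ℝ) :
    ∃ i, hH.eigenvalues i * (v ⬝ᵥ v) ≤ v ⬝ᵥ H *ᵥ v := by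
  obtain ⟨i, -, hi⟩ := exists_min_image univ hH.eigenvalues univ_nonempty
  refine ⟨i, ?_⟩
  rw [hH.dotProduct_self_eq_sum_sq, hH.dotProduct_mulVec_eq_sum_eigenvalues_mul_sq, mul_sum]
  exact sum_le_sum fun j _ => mul_le_mul_of_nonneg_right (hi j (mem_univ j)) (sq_nonneg _)

theorem exists_eigenvalues_le_diag (k : n) : ∃ i, hH.eigenvalues i ≤ H k k := by
  have : Nonempty n := ⟨k⟩
  simpa using hH.exists_eigenvalues_mul_le (Pi.single k 1)

theorem subsingleton_setOf_eigenvalues_lt {k : n} {c : ℝ}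
    (hc : ∀ v : n → ℝ, v k = 0 → c * (v ⬝ᵥ v) ≤ v ⬝ᵥ H *ᵥ v) :
    {i | hH.eigenvalues i < c}.Subsingleton := by
  intro i (hi : hH.eigenvalues i < c) j (hj : hH.eigenvalues j < c)
  by_contra hij
  set u := ⇑(hH.eigenvectorBasis i)
  set w := ⇑(hH.eigenvectorBasis j)
  have hHu : H *ᵥ u = hH.eigenvalues i • u := hH.mulVec_eigenvectorBasis i
  have hHw : H *ᵥ w = hH.eigenvalues j • w := hH.mulVec_eigenvectorBasis j
  have huu : u ⬝ᵥ u = 1 := by simpa using hH.dotProduct_eigenvectorBasis i i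
  have hww : w ⬝ᵥ w = 1 := by simpa using hH.dotProduct_eigenvectorBasis j j
  have huw : u ⬝ᵥ w = 0 := by simpa [hij] using hH.dotProduct_eigenvectorBasis i j
  have hwu : w ⬝ᵥ u = 0 := by rw [dotProduct_comm, huw]
  have hform := hc (w k • u - u k • w) (by simp [mul_comm])
  simp only [mulVec_sub, mulVec_smul, hHu, hHw, sub_dotProduct, dotProduct_sub, smul_dotProduct,
    dotProduct_smul, huu, hww, huw, hwu, smul_eq_mul, mul_one, mul_zero, sub_zero,
    zero_sub] at hform
  have huk : u k = 0 := by
    have h : (c - hH.eigenvalues j) * u k ^ 2 ≤ (c - hH.eigenvalues j) * 0 := by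
      nlinarith [mul_nonneg (sub_nonneg.2 hi.le) (sq_nonneg (w k))]
    exact pow_eq_zero_iff two_ne_zero |>.1 <|
      le_antisymm (le_of_mul_le_mul_left h (sub_pos.2 hj)) (sq_nonneg _)
  have hu := hc u huk
  rw [hHu, dotProduct_smul, huu, smul_eq_mul] at hu
  linarith

end Matrix.IsHermitian

theorem Matrix.IsSymm.dotProduct_mulVec_nonneg_of_sum_abs_le {n : Type*} [Fintype n]
    [DecidableEq n] {M : Matrix n n ℝ} (hM : M.IsSymm)
    (hdom : ∀ i, ∑ j ∈ univ.erase i, |M i j| ≤ M i i) (v : n → ℝ) :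
    0 ≤ v ⬝ᵥ M *ᵥ v := by
  have hpair : ∀ i j, -(|M i j| * (v i ^ 2 + v j ^ 2)) / 2 ≤ v i * M i j * v j := by
    intro i j
    rcases abs_cases (M i j) with ⟨h, hpos⟩ | ⟨h, hneg⟩ <;> rw [h]
    · nlinarith [mul_nonneg hpos (sq_nonneg (v i + v j))]
    · nlinarith [mul_nonneg (neg_nonneg.2 hneg.le) (sq_nonneg (v i - v j))]
  have hswap : ∑ i, ∑ j ∈ univ.erase i, |M i j| * v j ^ 2
      = ∑ i, ∑ j ∈ univ.erase i, |M i j| * v i ^ 2 := by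
    rw [sum_comm' (t' := univ) (s' := fun j => univ.erase j) (by simp [eq_comm])]
    simp only [hM.apply]
  calc 0 ≤ ∑ i, (M i i - ∑ j ∈ univ.erase i, |M i j|) * v i ^ 2 :=
        sum_nonneg fun i _ => mul_nonneg (sub_nonneg.2 (hdom i)) (sq_nonneg _)
    _ = ∑ i, (M i i * v i ^ 2 - ∑ j ∈ univ.erase i, |M i j| * (v i ^ 2 + v j ^ 2) / 2) := by
        simp only [mul_add, add_div, sum_add_distrib, sum_sub_distrib, ← sum_div, hswap, sub_mul,
          sum_mul]
        ring
    _ ≤ ∑ i, (M i i * v i ^ 2 + ∑ j ∈ univ.erase i, v i * M i j * v j) := by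
        refine sum_le_sum fun i _ => ?_
        have h := sum_le_sum (s := univ.erase i) fun j _ => hpair i j
        simp only [neg_div, sum_neg_distrib] at h
        linarith
    _ = v ⬝ᵥ M *ᵥ v := by
        simp only [dotProduct, mulVec, mul_sum, ← mul_assoc]
        refine sum_congr rfl fun i _ => ?_
        rw [← add_sum_erase _ _ (mem_univ i)]
        ring

noncomputable def propagationMatrix (L : ℕ) : Matrix (Fin (L + 1)) (Fin (L + 1)) ℝ :=
  Matrix.of fun i j =>
    if i = j then (if (i : ℕ) = 0 ∨ (i : ℕ) = L then 1 / 2 else 1)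
    else if (i : ℕ) + 1 = (j : ℕ) ∨ (j : ℕ) + 1 = (i : ℕ) then -(1 / 2) else 0

noncomputable def interpolatingHamiltonian (L : ℕ) (s : ℝ) : Matrix (Fin (L + 1)) (Fin (L + 1)) ℝ :=
  (1 - s) • diagonal (fun i => if i = 0 then 0 else 1) + s • propagationMatrix L

section

variable {L : ℕ}

theorem propagationMatrix_isSymm : (propagationMatrix L).IsSymm := by
  ext i j
  simp only [transpose_apply, propagationMatrix, of_apply, eq_comm (a := i), or_comm]
  split_ifs <;> simp_all

theorem sum_abs_propagationMatrix_le (i : Fin (L + 1)) :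
    ∑ j ∈ univ.erase i, |propagationMatrix L i j| ≤ propagationMatrix L i i := by
  have hle : ∑ j ∈ univ.erase i, |propagationMatrix L i j|
      ≤ ∑ j : Fin (L + 1),
          ((if (j : ℕ) + 1 = i then (1 / 2 : ℝ) else 0) +
            (if (i : ℕ) + 1 = j then 1 / 2 else 0)) := by
    refine (sum_le_sum fun j hj => ?_).trans
      (sum_le_sum_of_subset_of_nonneg (erase_subset _ _) fun _ _ _ => by positivity)
    simp only [propagationMatrix, of_apply, if_neg (ne_of_mem_erase hj).symm]
    split_ifs <;> first | omega | norm_num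
  simp only [sum_add_distrib, sum_ite, sum_const_zero, add_zero, sum_const, nsmul_eq_mul] at hle
  have hbelow : (#{j : Fin (L + 1) | (j : ℕ) + 1 = i} : ℝ) ≤ if (i : ℕ) = 0 then 0 else 1 := by
    split_ifs with h
    · simp only [Nat.cast_nonpos, card_eq_zero, filter_eq_empty_iff, mem_univ, forall_const]
      omega
    · exact_mod_cast card_le_one.2 fun a ha b hb =>
        Fin.ext (by simp only [mem_filter] at ha hb; omega)
  have habove : (#{j : Fin (L + 1) | (i : ℕ) + 1 = j} : ℝ) ≤ if (i : ℕ) = L then 0 else 1 := by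
    split_ifs with h
    · simp only [Nat.cast_nonpos, card_eq_zero, filter_eq_empty_iff, mem_univ, forall_const]
      omega
    · exact_mod_cast card_le_one.2 fun a ha b hb =>
        Fin.ext (by simp only [mem_filter] at ha hb; omega)
  have hdiag : propagationMatrix L i i = if (i : ℕ) = 0 ∨ (i : ℕ) = L then 1 / 2 else 1 := by
    simp [propagationMatrix]
  rw [hdiag]
  split_ifs at hbelow habove ⊢ <;> first | omega | linarith

theorem interpolatingHamiltonian_apply_zero_zero (s : ℝ) :
    interpolatingHamiltonian L s 0 0 = s / 2 := by
  simp [interpolatingHamiltonian, propagationMatrix, div_eq_mul_inv]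

theorem mul_dotProduct_self_le_interpolatingHamiltonian {s : ℝ} (hs : 0 ≤ s)
    {v : Fin (L + 1) → ℝ} (hv : v 0 = 0) :
    (1 - s) * (v ⬝ᵥ v) ≤ v ⬝ᵥ interpolatingHamiltonian L s *ᵥ v := by
  have hD : v ⬝ᵥ diagonal (fun i => if i = 0 then 0 else 1) *ᵥ v = v ⬝ᵥ v := by
    simp only [mulVec_diagonal, dotProduct]
    exact sum_congr rfl fun i _ => by rcases eq_or_ne i 0 with rfl | hi <;> simp [*]
  have hA : 0 ≤ v ⬝ᵥ propagationMatrix L *ᵥ v :=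
    propagationMatrix_isSymm.dotProduct_mulVec_nonneg_of_sum_abs_le sum_abs_propagationMatrix_le v
  rw [interpolatingHamiltonian, add_mulVec, smul_mulVec, smul_mulVec, dotProduct_add,
    dotProduct_smul, dotProduct_smul, smul_eq_mul, smul_eq_mul, hD]
  nlinarith [mul_nonneg hs hA]

end

/-- For `0 ≤ s < 1/3`, the matrix `H(s) = (1-s)·diag(0,1,…,1) + s·A`, where `A` is
the tridiagonal matrix with diagonal `(1/2,1,…,1,1/2)` and off-diagonal entries `-1/2`,
has exactly one eigenvalue smaller than `1/3`, all other eigenvalues larger than `2/3`,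
and hence spectral gap at least `1/3`. -/
theorem gap_of_interpolating_hamiltonian_small_s (L : ℕ) (s : ℝ)
    (hs0 : 0 ≤ s) (hs : s < 1 / 3)
    (D A H : Matrix (Fin (L + 1)) (Fin (L + 1)) ℝ)
    (hD : D = Matrix.diagonal (fun i => if i = 0 then 0 else 1))
    (hA : A = Matrix.of fun (i j : Fin (L + 1)) =>
      if i = j then (if (i : ℕ) = 0 ∨ (i : ℕ) = L then 1 / 2 else 1)
      else if (i : ℕ) + 1 = (j : ℕ) ∨ (j : ℕ) + 1 = (i : ℕ) then -(1 / 2) else 0)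
    (hH : H = (1 - s) • D + s • A)
    (hHerm : H.IsHermitian) :
    ((Finset.univ.filter (fun i => hHerm.eigenvalues i < 1 / 3)).card = 1) ∧
    (∀ i, hHerm.eigenvalues i < 1 / 3 ∨ 2 / 3 < hHerm.eigenvalues i) ∧
    (∀ i j, hHerm.eigenvalues i < 1 / 3 → ¬ (hHerm.eigenvalues j < 1 / 3) →
      1 / 3 ≤ hHerm.eigenvalues j - hHerm.eigenvalues i) := by
  have hH' : H = interpolatingHamiltonian L s := by rw [hH, hD, hA]; rfl
  have hform : ∀ v : Fin (L + 1) → ℝ, v 0 = 0 → (1 - s) * (v ⬝ᵥ v) ≤ v ⬝ᵥ H *ᵥ v :=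
    hH' ▸ fun v => mul_dotProduct_self_le_interpolatingHamiltonian hs0
  obtain ⟨i₀, hi₀⟩ := hHerm.exists_eigenvalues_le_diag 0
  have h₀₀ : H 0 0 = s / 2 := hH' ▸ interpolatingHamiltonian_apply_zero_zero s
  have hlow : hHerm.eigenvalues i₀ < 1 / 3 := by linarith
  have hhigh : ∀ j, j ≠ i₀ → 2 / 3 < hHerm.eigenvalues j := fun j hj => by
    by_contra! h
    exact hj (hHerm.subsingleton_setOf_eigenvalues_lt hform
      (show hHerm.eigenvalues j < 1 - s by linarith)
      (show hHerm.eigenvalues i₀ < 1 - s by linarith))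
  have hiff : ∀ j, hHerm.eigenvalues j < 1 / 3 ↔ j = i₀ := fun j =>
    ⟨fun h => by_contra fun hj => by linarith [hhigh j hj], fun h => h ▸ hlow⟩
  refine ⟨card_eq_one.2 ⟨i₀, ?_⟩, fun j => ?_, fun i j hi hj => ?_⟩
  · ext j
    simp only [mem_filter, mem_univ, true_and, mem_singleton, hiff]
  · by_cases hj : j = i₀
    · exact .inl (hj ▸ hlow)
    · exact .inr (hhigh j hj)
  · rw [hiff] at hi hj
    linarith [hhigh j hj, hi ▸ hlow]
end

section
/- Let H(s) = (1-s)·D + s·A with D and A as above (D = diag(0,1,...,1), A the path Laplacian with -1/2 off-diagonals), and let G(s) = I - H(s). For any 0 < s ≤ 1, the ground state (α_0, ..., α_L) of H(s) (normalized with positive entries) is monotone: α_0 ≥ α_1 ≥ ... ≥ α_L > 0. -/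
lemma gsm_sum2 {n : ℕ} (g : Fin n → ℝ) (p q : Fin n) (a b : ℝ)
    (h : ∀ j, g j = (if j = p then a else 0) + (if j = q then b else 0)) :
    ∑ j, g j = a + b := by
  simp [h, Finset.sum_add_distrib]

lemma gsm_sum3 {n : ℕ} (g : Fin n → ℝ) (p q r : Fin n) (a b c : ℝ)
    (h : ∀ j, g j = (if j = p then a else 0) + (if j = q then b else 0) + (if j = r then c else 0)) :
    ∑ j, g j = a + b + c := by
  simp [h, Finset.sum_add_distrib]

set_option maxHeartbeats 1600000 in
/-- For `0 < s ≤ 1`, the ground state `α` (normalized with positive entries) of the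
matrix `H(s) = (1-s)·diag(0,1,…,1) + s·A`, where `A` is the path Laplacian with
`-1/2` off-diagonal entries, is monotone: `α 0 ≥ α 1 ≥ … ≥ α L > 0`. -/
theorem ground_state_monotone (L : ℕ) (s : ℝ) (hs0 : 0 < s) (hs1 : s ≤ 1)
    (D A H : Matrix (Fin (L + 1)) (Fin (L + 1)) ℝ)
    (hD : D = Matrix.diagonal (fun i => if i = 0 then 0 else 1))
    (hA : A = Matrix.of fun (i j : Fin (L + 1)) =>
      if i = j then (if (i : ℕ) = 0 ∨ (i : ℕ) = L then 1 / 2 else 1)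
      else if (i : ℕ) + 1 = (j : ℕ) ∨ (j : ℕ) + 1 = (i : ℕ) then -(1 / 2) else 0)
    (hH : H = (1 - s) • D + s • A)
    (lam : ℝ) (α : Fin (L + 1) → ℝ)
    (hαpos : ∀ i, 0 < α i)
    (hαnorm : ∑ i, α i ^ 2 = 1)
    (heig : H.mulVec α = lam • α)
    (hmin : ∀ (μ : ℝ) (v : Fin (L + 1) → ℝ), v ≠ 0 → H.mulVec v = μ • v → lam ≤ μ) :
    ∀ i j : Fin (L + 1), i ≤ j → α j ≤ α i := by
  rcases Nat.eq_zero_or_pos L with hL | hL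
  · subst hL
    intro i j _
    have : i = j := by omega
    rw [this]
  -- entry formula
  have Hent : ∀ i j : Fin (L+1), H i j =
      if (i:ℕ) = (j:ℕ) then
        ((1-s) * (if (i:ℕ) = 0 then 0 else 1) + s * (if (i:ℕ) = 0 ∨ (i:ℕ) = L then 1/2 else 1))
      else if (i:ℕ)+1 = (j:ℕ) ∨ (j:ℕ)+1 = (i:ℕ) then s * (-(1/2)) else 0 := by
    intro i j
    rw [hH, hD, hA]
    simp only [Matrix.add_apply, Matrix.smul_apply, Matrix.diagonal_apply, Matrix.of_apply,
      Fin.ext_iff, Fin.val_zero, smul_eq_mul]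
    split_ifs <;> ring
  -- the totalized eigenvector
  set f : ℕ → ℝ := fun n => α ⟨min n L, by omega⟩ with hf
  have hfval : ∀ (n : ℕ) (hn : n < L + 1), f n = α ⟨n, hn⟩ := by
    intro n hn
    simp only [hf]
    congr 1
    exact Fin.ext (by simp; omega)
  have hfpos : ∀ n, 0 < f n := fun n => hαpos _
  -- generic eigen-row
  have hrow : ∀ i : Fin (L+1), ∑ j, H i j * α j = lam * α i := by
    intro i
    have := congrFun heig i
    rw [Matrix.mulVec, dotProduct] at this
    simpa using this
  -- row 0
  have E0 : s/2 * f 0 + (-(s/2)) * f 1 = lam * f 0 := by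
    rw [hfval 0 (by omega), hfval 1 (by omega)]
    rw [← gsm_sum2 (fun j => H ⟨0, by omega⟩ j * α j) ⟨0, by omega⟩ ⟨1, by omega⟩ _ _ ?_]
    · exact hrow _
    · intro j
      simp only [Hent]
      by_cases hj0 : j = ⟨0, by omega⟩
      · subst hj0
        simp only [Fin.ext_iff, Fin.val_mk]
        split_ifs <;> first
          | ring1
          | (exfalso; omega)
          | (exfalso; tauto)
      · by_cases hj1 : j = ⟨1, by omega⟩
        · subst hj1
          simp only [Fin.ext_iff, Fin.val_mk]
          split_ifs <;> first
          | ring1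
          | (exfalso; omega)
          | (exfalso; tauto)
        · simp only [Fin.ext_iff, Fin.val_mk] at hj0 hj1 ⊢
          split_ifs <;> first
          | ring1
          | (exfalso; omega)
          | (exfalso; tauto)
  -- row L
  have EL : ((1-s) + s/2) * f L + (-(s/2)) * f (L-1) = lam * f L := by
    rw [hfval L (by omega), hfval (L-1) (by omega)]
    rw [← gsm_sum2 (fun j => H ⟨L, by omega⟩ j * α j) ⟨L, by omega⟩ ⟨L-1, by omega⟩ _ _ ?_]
    · exact hrow _
    · intro j
      simp only [Hent]
      by_cases hj0 : j = ⟨L, by omega⟩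
      · subst hj0
        simp only [Fin.ext_iff, Fin.val_mk]
        split_ifs <;> first
          | ring1
          | (exfalso; omega)
          | (exfalso; tauto)
      · by_cases hj1 : j = ⟨L-1, by omega⟩
        · subst hj1
          simp only [Fin.ext_iff, Fin.val_mk]
          split_ifs <;> first
          | ring1
          | (exfalso; omega)
          | (exfalso; tauto)
        · simp only [Fin.ext_iff, Fin.val_mk] at hj0 hj1 ⊢
          split_ifs <;> first
          | ring1
          | (exfalso; omega)
          | (exfalso; tauto)
  -- interior rows
  have EI : ∀ k : ℕ, 0 < k → k < L →
      f k + (-(s/2)) * f (k-1) + (-(s/2)) * f (k+1) = lam * f k := by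
    intro k hk0 hkL
    rw [hfval k (by omega), hfval (k-1) (by omega), hfval (k+1) (by omega)]
    rw [← gsm_sum3 (fun j => H ⟨k, by omega⟩ j * α j) ⟨k, by omega⟩ ⟨k-1, by omega⟩
        ⟨k+1, by omega⟩ _ _ _ ?_]
    · exact hrow _
    · intro j
      simp only [Hent]
      by_cases hj0 : j = ⟨k, by omega⟩
      · subst hj0
        simp only [Fin.ext_iff, Fin.val_mk]
        split_ifs <;> first
          | ring1
          | (exfalso; omega)
          | (exfalso; tauto)
      · by_cases hj1 : j = ⟨k-1, by omega⟩
        · subst hj1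
          simp only [Fin.ext_iff, Fin.val_mk]
          split_ifs <;> first
          | ring1
          | (exfalso; omega)
          | (exfalso; tauto)
        · by_cases hj2 : j = ⟨k+1, by omega⟩
          · subst hj2
            simp only [Fin.ext_iff, Fin.val_mk]
            split_ifs <;> first
          | ring1
          | (exfalso; omega)
          | (exfalso; tauto)
          · simp only [Fin.ext_iff, Fin.val_mk] at hj0 hj1 hj2 ⊢
            split_ifs <;> first
          | ring1
          | (exfalso; omega)
          | (exfalso; tauto)
  -- difference sequence
  set c : ℝ := 2/s * (s - 1 + lam) with hc
  set δ : ℕ → ℝ := fun n => f n - f (n+1) with hδ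
  have hsne : s ≠ 0 := ne_of_gt hs0
  have hδ0 : δ 0 = 2/s * lam * f 0 := by
    simp only [hδ]
    field_simp
    linarith [E0]
  have hδstep : ∀ k : ℕ, 0 < k → k < L → δ k = δ (k-1) + c * f k := by
    intro k hk0 hkL
    have h := EI k hk0 hkL
    have hk1 : k - 1 + 1 = k := by omega
    simp only [hδ, hc, hk1]
    field_simp
    nlinarith [h, sq_nonneg s]
  have hδL : δ (L-1) = -c * f L := by
    have h := EL
    have hk1 : L - 1 + 1 = L := by omega
    simp only [hδ, hc, hk1]
    field_simp
    nlinarith [h, sq_nonneg s]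
  -- all differences are nonnegative
  have hδnn : ∀ k, k < L → 0 ≤ δ k := by
    rcases le_or_gt 0 c with hcpos | hcneg
    · -- c ≥ 0 : forward induction; note lam ≥ 1 - s ≥ 0
      have hlam : 0 ≤ lam := by
        have : 0 ≤ s * c := mul_nonneg (le_of_lt hs0) hcpos
        rw [hc] at this
        have hs : s * (2/s * (s - 1 + lam)) = 2 * (s - 1 + lam) := by field_simp
        nlinarith
      intro k
      induction k with
      | zero =>
        intro _
        rw [hδ0]
        exact mul_nonneg (mul_nonneg (by positivity) hlam) (le_of_lt (hfpos 0))
      | succ k ih =>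
        intro hk
        have hstep := hδstep (k+1) (by omega) hk
        have : (k+1) - 1 = k := by omega
        rw [this] at hstep
        have h1 : 0 ≤ δ k := ih (by omega)
        have h2 : 0 ≤ c * f (k+1) := mul_nonneg hcpos (le_of_lt (hfpos _))
        linarith [hstep]
    · -- c < 0 : backward induction
      have key : ∀ t, t < L → 0 ≤ δ (L - 1 - t) := by
        intro t
        induction t with
        | zero =>
          intro _
          simp only [Nat.sub_zero]
          rw [hδL]
          have := hfpos L
          nlinarith
        | succ t ih =>
          intro ht
          have hidx : L - 1 - t = (L - 1 - (t+1)) + 1 := by omega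
          have h1 : 0 ≤ δ (L - 1 - t) := ih (by omega)
          set k := L - 1 - (t+1) with hk
          have hk0 : 0 < k + 1 := by omega
          have hkL : k + 1 < L := by omega
          have hstep := hδstep (k+1) hk0 hkL
          have : (k+1) - 1 = k := by omega
          rw [this] at hstep
          rw [hidx] at h1
          have h2 : 0 ≤ -c * f (k+1) := mul_nonneg (by linarith) (le_of_lt (hfpos _))
          linarith
      intro k hk
      have := key (L - 1 - k) (by omega)
      have hkk : L - 1 - (L - 1 - k) = k := by omega
      rwa [hkk] at this
  -- monotonicity of f on [0, L]
  have hfmono : ∀ d n, n + d ≤ L → f (n + d) ≤ f n := by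
    intro d
    induction d with
    | zero => intro n _; simp
    | succ d ih =>
      intro n hn
      have h1 : f (n + d + 1) ≤ f (n + d) := by
        have := hδnn (n + d) (by omega)
        simp only [hδ] at this
        linarith
      have h2 : f (n + d) ≤ f n := ih n (by omega)
      calc f (n + (d+1)) = f (n + d + 1) := by ring_nf
        _ ≤ f n := le_trans h1 h2
  -- conclude
  intro i j hij
  have hij' : (i : ℕ) ≤ (j : ℕ) := hij
  have hj : (j : ℕ) ≤ L := by omega
  have := hfmono ((j : ℕ) - (i : ℕ)) (i : ℕ) (by omega)
  have hidx : (i : ℕ) + ((j : ℕ) - (i : ℕ)) = (j : ℕ) := by omega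
  rw [hidx] at this
  rw [hfval (j : ℕ) (by omega), hfval (i : ℕ) (by omega)] at this
  simpa using this
end

section
/- Let G be an (L+1)×(L+1) real symmetric matrix with non-negative entries and positive top eigenvalue μ with a strictly positive top eigenvector v_0, and suppose G maps monotone non-increasing non-negative vectors to monotone non-increasing non-negative vectors. Then v_0 is monotone non-increasing. -/
/-!
The normalised powers `μ⁻ᵐ Gᵐ` converge, by the spectral theorem, to a matrix `P` (the spectral
projection onto the `μ`-eigenspace), so `y = P 1` is an eigenvector for `μ`, hence `y = c v₀`.
Since `G` preserves the closed cone of non-negative non-increasing vectors and `1` lies in it,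
`y` is non-increasing. Finally `⟨v₀, μ⁻ᵐ Gᵐ 1⟩ = ⟨v₀, 1⟩ > 0` for every `m` by symmetry of `G`,
so `c ‖v₀‖² = ⟨v₀, y⟩ > 0` and `c > 0`.
-/

open Filter Topology Matrix Unitary

theorem Filter.Tendsto.mul_eq_smul_of_inv_pow_smul_pow {𝕜 A : Type*} [Field 𝕜] [Ring A]
    [Algebra 𝕜 A] [TopologicalSpace A] [ContinuousMul A] [ContinuousConstSMul 𝕜 A] [T2Space A]
    {a P : A} {μ : 𝕜} (hμ : μ ≠ 0)
    (h : Tendsto (fun m : ℕ => (μ ^ m)⁻¹ • a ^ m) atTop (𝓝 P)) : a * P = μ • P := by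
  have hleft : Tendsto (fun m : ℕ => a * ((μ ^ m)⁻¹ • a ^ m)) atTop (𝓝 (a * P)) :=
    tendsto_const_nhds.mul h
  have hright : Tendsto (fun m : ℕ => μ • ((μ ^ (m + 1))⁻¹ • a ^ (m + 1))) atTop (𝓝 (μ • P)) :=
    ((tendsto_add_atTop_iff_nat 1).2 h).const_smul μ
  refine tendsto_nhds_unique (hleft.congr fun m => ?_) hright
  rw [mul_smul_comm, smul_smul, pow_succ' μ, mul_inv, ← mul_assoc, mul_inv_cancel₀ hμ, one_mul,
    pow_succ']

theorem Matrix.IsHermitian.exists_tendsto_inv_pow_smul_pow {n : Type*} [Fintype n] [DecidableEq n]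
    {G : Matrix n n ℝ} (hG : G.IsHermitian) {μ : ℝ} (hμ : μ ≠ 0)
    (h : ∀ k, hG.eigenvalues k = μ ∨ |hG.eigenvalues k| < μ) :
    ∃ P, Tendsto (fun m : ℕ => (μ ^ m)⁻¹ • G ^ m) atTop (𝓝 P) := by
  have hconv : ∀ k, ∃ c, Tendsto (fun m : ℕ => (hG.eigenvalues k / μ) ^ m) atTop (𝓝 c) := by
    intro k
    rcases h k with hk | hk
    · exact ⟨1, by simp [hk, div_self hμ]⟩
    · refine ⟨0, tendsto_pow_atTop_nhds_zero_of_abs_lt_one ?_⟩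
      rw [abs_div, div_lt_one (abs_pos.2 hμ)]
      exact hk.trans_le (le_abs_self μ)
  choose c hc using hconv
  have hpow : ∀ m : ℕ, (μ ^ m)⁻¹ • G ^ m = conjStarAlgAut ℝ _ hG.eigenvectorUnitary
      (diagonal fun k => (hG.eigenvalues k / μ) ^ m) := by
    intro m
    conv_lhs => rw [hG.spectral_theorem]
    rw [← map_pow, ← map_smul, diagonal_pow, ← diagonal_smul]
    congr 2 with k
    simp [div_pow, inv_mul_eq_div]
  refine ⟨conjStarAlgAut ℝ _ hG.eigenvectorUnitary (diagonal c), ?_⟩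
  simp_rw [hpow]
  have hcont : Continuous (conjStarAlgAut ℝ (Matrix n n ℝ) hG.eigenvectorUnitary) :=
    LinearMap.continuous_of_finiteDimensional
      (conjStarAlgAut ℝ (Matrix n n ℝ) hG.eigenvectorUnitary).toAlgEquiv.toLinearMap
  exact (hcont.comp continuous_id.matrix_diagonal).tendsto _ |>.comp (tendsto_pi_nhds.2 hc)

theorem Matrix.mapsTo_pow_mulVec {n R : Type*} [Fintype n] [DecidableEq n] [CommSemiring R]
    {G : Matrix n n R} {s : Set (n → R)} (h : Set.MapsTo (G *ᵥ ·) s s) (m : ℕ) :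
    Set.MapsTo (G ^ m *ᵥ ·) s s := by
  induction m with
  | zero => intro x hx; simpa using hx
  | succ m ih => intro x hx; simpa only [pow_succ', ← mulVec_mulVec] using h (ih hx)

theorem Matrix.vecMul_pow_of_vecMul_eq_smul {n R : Type*} [Fintype n] [DecidableEq n]
    [CommSemiring R] {G : Matrix n n R} {μ : R} {v : n → R} (hv : v ᵥ* G = μ • v) (m : ℕ) :
    v ᵥ* G ^ m = μ ^ m • v := by
  induction m with
  | zero => simp
  | succ m ih => rw [pow_succ, ← vecMul_vecMul, ih, smul_vecMul, hv, smul_smul, pow_succ]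

theorem Matrix.vecMul_eq_of_tendsto_inv_pow_smul_pow {n : Type*} [Fintype n] [DecidableEq n]
    {G P : Matrix n n ℝ} {μ : ℝ} (hμ : μ ≠ 0) {v : n → ℝ} (hv : v ᵥ* G = μ • v)
    (h : Tendsto (fun m : ℕ => (μ ^ m)⁻¹ • G ^ m) atTop (𝓝 P)) : v ᵥ* P = v := by
  refine tendsto_nhds_unique ((continuous_const.matrix_vecMul continuous_id).tendsto P |>.comp h)
    (tendsto_const_nhds.congr fun m => ?_)
  rw [Function.comp_apply, id, vecMul_smul, vecMul_pow_of_vecMul_eq_smul hv, smul_smul,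
    inv_mul_cancel₀ (pow_ne_zero m hμ), one_smul]

theorem top_eigenvector_monotone_general (L : ℕ)
    (G : Matrix (Fin (L + 1)) (Fin (L + 1)) ℝ)
    (hHerm : G.IsHermitian)
    (μ : ℝ) (hμ : 0 < μ)
    (v₀ : Fin (L + 1) → ℝ) (hv₀ : ∀ i, 0 < v₀ i)
    (heig : G.mulVec v₀ = μ • v₀)
    (htop : ∀ (δ : ℝ) (w : Fin (L + 1) → ℝ), w ≠ 0 → G.mulVec w = δ • w →
      δ = μ ∨ |δ| < μ)
    (huniq : ∀ w : Fin (L + 1) → ℝ, G.mulVec w = μ • w → ∃ c : ℝ, w = c • v₀)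
    (hmono : ∀ x : Fin (L + 1) → ℝ, (∀ i, 0 ≤ x i) → (∀ i j, i ≤ j → x j ≤ x i) →
      (∀ i, 0 ≤ G.mulVec x i) ∧ (∀ i j, i ≤ j → G.mulVec x j ≤ G.mulVec x i)) :
    ∀ i j : Fin (L + 1), i ≤ j → v₀ j ≤ v₀ i := by
  obtain ⟨P, hP⟩ := hHerm.exists_tendsto_inv_pow_smul_pow hμ.ne' fun k =>
    htop _ _ ((WithLp.ofLp_eq_zero 2).ne.2 (hHerm.eigenvectorBasis.orthonormal.ne_zero k))
      (hHerm.mulVec_eigenvectorBasis k)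
  set y := P *ᵥ 1
  obtain ⟨c, hyc⟩ : ∃ c : ℝ, y = c • v₀ := huniq y <| by
    rw [mulVec_mulVec, hP.mul_eq_smul_of_inv_pow_smul_pow hμ.ne', smul_mulVec]
  have hy : Antitone y := by
    refine isClosed_antitone.mem_of_tendsto
      ((continuous_id.matrix_mulVec continuous_const).tendsto P |>.comp hP)
      (Eventually.of_forall fun m => ?_)
    have hcone : Set.MapsTo (G ^ m *ᵥ ·) {x | 0 ≤ x ∧ Antitone x} {x | 0 ≤ x ∧ Antitone x} :=
      mapsTo_pow_mulVec (fun x hx => hmono x hx.1 hx.2) m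
    simp only [Function.comp_apply, id, smul_mulVec]
    exact (hcone ⟨zero_le_one, antitone_const⟩).2.const_smul (inv_nonneg.2 (pow_nonneg hμ.le m))
  have hv₀G : v₀ ᵥ* G = μ • v₀ := by
    rw [← (isHermitian_iff_isSymm.1 hHerm).eq, vecMul_transpose, heig]
  have hdot : v₀ ⬝ᵥ y = v₀ ⬝ᵥ 1 := by
    rw [dotProduct_mulVec, vecMul_eq_of_tendsto_inv_pow_smul_pow hμ.ne' hv₀G hP]
  have hc : 0 < c := by
    have : 0 < c * (v₀ ⬝ᵥ v₀) := by
      rw [← smul_eq_mul, ← smul_dotProduct, ← hyc, dotProduct_comm, hdot, dotProduct_one]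
      exact Finset.sum_pos (fun i _ => hv₀ i) Finset.univ_nonempty
    exact pos_of_mul_pos_left this (dotProduct_self_star_nonneg v₀)
  rw [hyc] at hy
  exact fun i j hij => le_of_mul_le_mul_left (hy hij) hc

/-- If a real symmetric matrix `G` with non-negative entries has positive top eigenvalue
`μ` (all other eigenvalues strictly smaller in absolute value, eigenspace of `μ`
one-dimensional) with strictly positive top eigenvector `v₀`, and `G` maps monotone
non-increasing non-negative vectors to monotone non-increasing non-negative vectors,
then `v₀` is monotone non-increasing. -/
theorem top_eigenvector_monotone (L : ℕ)
    (G : Matrix (Fin (L + 1)) (Fin (L + 1)) ℝ)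
    (hHerm : G.IsHermitian) (hnn : ∀ i j, 0 ≤ G i j)
    (μ : ℝ) (hμ : 0 < μ)
    (v₀ : Fin (L + 1) → ℝ) (hv₀ : ∀ i, 0 < v₀ i)
    (heig : G.mulVec v₀ = μ • v₀)
    (htop : ∀ (δ : ℝ) (w : Fin (L + 1) → ℝ), w ≠ 0 → G.mulVec w = δ • w →
      δ = μ ∨ |δ| < μ)
    (huniq : ∀ w : Fin (L + 1) → ℝ, G.mulVec w = μ • w → ∃ c : ℝ, w = c • v₀)
    (hmono : ∀ x : Fin (L + 1) → ℝ, (∀ i, 0 ≤ x i) → (∀ i j, i ≤ j → x j ≤ x i) →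
      (∀ i, 0 ≤ G.mulVec x i) ∧ (∀ i j, i ≤ j → G.mulVec x j ≤ G.mulVec x i)) :
    ∀ i j : Fin (L + 1), i ≤ j → v₀ j ≤ v₀ i :=
  top_eigenvector_monotone_general L G hHerm μ hμ v₀ hv₀ heig htop huniq hmono
end

section
/- Let P be an (L+1)×(L+1) stochastic matrix that is reversible with respect to a stationary distribution π (π_i P_{ij} = π_j P_{ji}), with π monotone non-increasing (π_0 ≥ π_1 ≥ ... ≥ π_L > 0), P tridiagonal (P_{ij} = 0 whenever |i-j| > 1), and with all nearest-neighbor transition probabilities P_{k,k+1} ≥ c for some c > 0. Then the conductance φ(P) = min_{B: 0<π(B)≤1/2} F(B)/π(B) satisfies φ(P) ≥ c/(2L), where F(B) = Σ_{i∈B, j∉B} π_i P_{ij}. -/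
/-!
Let `S` be whichever of `B`, `Bᶜ` avoids the state `0`; it is nonempty, carries at least the
mass of `B`, and by reversibility `F(B) = F(Sᶜ)`. If `m = k + 1` is the least element of `S`,
the edge `k → m` leaves `Sᶜ`, so `F(Sᶜ) ≥ π k P k m ≥ c π k`, while monotonicity gives
`π(S) ≤ |S| π k ≤ L π k`.
-/

open Finset

section ErgodicFlow

variable {ι : Type*} [Fintype ι] [DecidableEq ι]

def ergodicFlow (π : ι → ℝ) (P : Matrix ι ι ℝ) (B : Finset ι) : ℝ :=
  ∑ i ∈ B, ∑ j ∈ Bᶜ, π i * P i j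

theorem ergodicFlow_compl {π : ι → ℝ} {P : Matrix ι ι ℝ}
    (hrev : ∀ i j, π i * P i j = π j * P j i) (B : Finset ι) :
    ergodicFlow π P Bᶜ = ergodicFlow π P B := by
  unfold ergodicFlow
  rw [compl_compl, sum_comm]
  exact sum_congr rfl fun i _ => sum_congr rfl fun j _ => hrev j i

theorem mul_le_ergodicFlow {π : ι → ℝ} {P : Matrix ι ι ℝ}
    (hπ : ∀ i, 0 ≤ π i) (hP : ∀ i j, 0 ≤ P i j) {B : Finset ι} {i j : ι}
    (hi : i ∈ B) (hj : j ∉ B) : π i * P i j ≤ ergodicFlow π P B := by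
  have hterm : ∀ i j, 0 ≤ π i * P i j := fun i j => mul_nonneg (hπ i) (hP i j)
  calc π i * P i j ≤ ∑ j ∈ Bᶜ, π i * P i j :=
        single_le_sum (fun j _ => hterm i j) (mem_compl.mpr hj)
    _ ≤ ergodicFlow π P B :=
        single_le_sum (fun i _ => sum_nonneg fun j _ => hterm i j) hi

end ErgodicFlow

theorem Fin.exists_castSucc_notMem_of_zero_notMem {L : ℕ} {S : Finset (Fin (L + 1))}
    (hS : S.Nonempty) (h0 : 0 ∉ S) :
    ∃ k : Fin L, k.castSucc ∉ S ∧ k.succ ∈ S ∧ ∀ i ∈ S, k.castSucc ≤ i := by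
  have hmin_ne : S.min' hS ≠ 0 := fun h => h0 (h ▸ S.min'_mem hS)
  obtain ⟨k, hk⟩ := Fin.eq_succ_of_ne_zero hmin_ne
  have hk_lt : ∀ i ∈ S, k.castSucc < i := fun i hi =>
    Fin.castSucc_lt_succ.trans_le (hk ▸ S.min'_le i hi)
  exact ⟨k, fun h => lt_irrefl _ (hk_lt _ h), hk ▸ S.min'_mem hS, fun i hi => (hk_lt i hi).le⟩

theorem exists_zero_notMem_of_sum_le_half {L : ℕ} {π : Fin (L + 1) → ℝ}
    {P : Matrix (Fin (L + 1)) (Fin (L + 1)) ℝ} (hπsum : ∑ i, π i = 1)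
    (hrev : ∀ i j, π i * P i j = π j * P j i) {B : Finset (Fin (L + 1))}
    (hB : B.Nonempty) (hhalf : ∑ i ∈ B, π i ≤ 1 / 2) :
    ∃ S : Finset (Fin (L + 1)), 0 ∉ S ∧ S.Nonempty ∧ ∑ i ∈ B, π i ≤ ∑ i ∈ S, π i ∧
      ergodicFlow π P Sᶜ = ergodicFlow π P B := by
  by_cases h0 : 0 ∈ B
  · have hmass : ∑ i ∈ B, π i + ∑ i ∈ Bᶜ, π i = 1 := (sum_add_sum_compl B π).trans hπsum
    have hBc : Bᶜ.Nonempty := by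
      rw [nonempty_iff_ne_empty, Ne, compl_eq_empty_iff]
      rintro rfl
      linarith [sum_compl_add_sum (univ : Finset (Fin (L + 1))) π]
    exact ⟨Bᶜ, fun h => mem_compl.mp h h0, hBc, by linarith, by rw [compl_compl]⟩
  · exact ⟨B, h0, hB, le_rfl, ergodicFlow_compl hrev B⟩

theorem conductance_of_monotone_line_walk_general (L : ℕ)
    (P : Matrix (Fin (L + 1)) (Fin (L + 1)) ℝ)
    (π : Fin (L + 1) → ℝ)
    (hPnn : ∀ i j, 0 ≤ P i j)
    (hπpos : ∀ i, 0 < π i) (hπsum : ∑ i, π i = 1)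
    (hrev : ∀ i j, π i * P i j = π j * P j i)
    (hπmono : ∀ i j : Fin (L + 1), i ≤ j → π j ≤ π i)
    (c : ℝ) (hc : 0 < c)
    (hnb : ∀ k : Fin L, c ≤ P k.castSucc k.succ) :
    ∀ B : Finset (Fin (L + 1)), B.Nonempty → (∑ i ∈ B, π i) ≤ 1 / 2 →
      (c / (2 * L)) * (∑ i ∈ B, π i) ≤ ∑ i ∈ B, ∑ j ∈ Bᶜ, π i * P i j := by
  intro B hB hhalf
  obtain ⟨S, hS0, hS, hBS, hflow⟩ := exists_zero_notMem_of_sum_le_half hπsum hrev hB hhalf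
  obtain ⟨k, hk_out, hk_in, hk_le⟩ := Fin.exists_castSucc_notMem_of_zero_notMem hS hS0
  have hπk := (hπpos k.castSucc).le
  have hL : (0 : ℝ) < L := Nat.cast_pos.mpr k.pos
  have hmass : ∑ i ∈ S, π i ≤ L * π k.castSucc := by
    have hcard : (#S : ℝ) ≤ L := by
      exact_mod_cast Nat.lt_succ_iff.mp (by simpa using card_lt_univ_of_notMem hS0)
    calc ∑ i ∈ S, π i ≤ #S • π k.castSucc :=
          sum_le_card_nsmul S π _ fun i hi => hπmono _ _ (hk_le i hi)
      _ ≤ L * π k.castSucc := by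
          rw [nsmul_eq_mul]; exact mul_le_mul_of_nonneg_right hcard hπk
  have hedge : c * π k.castSucc ≤ ergodicFlow π P B :=
    calc c * π k.castSucc ≤ π k.castSucc * P k.castSucc k.succ := by
          rw [mul_comm]; exact mul_le_mul_of_nonneg_left (hnb k) hπk
      _ ≤ ergodicFlow π P B :=
          hflow ▸ mul_le_ergodicFlow (fun i => (hπpos i).le) hPnn (mem_compl.mpr hk_out)
            fun h => mem_compl.mp h hk_in
  calc c / (2 * L) * ∑ i ∈ B, π i ≤ c / (2 * L) * (L * π k.castSucc) := by
        gcongr; exact hBS.trans hmass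
    _ = c * π k.castSucc / 2 := by field_simp
    _ ≤ ergodicFlow π P B := by nlinarith

open Finset in
/-- Conductance lower bound for a birth-death chain with monotone stationary
distribution: if `P` is a stochastic matrix on `{0,…,L}`, reversible with respect to a
monotone non-increasing positive stationary distribution `π`, tridiagonal, and all
nearest-neighbor transition probabilities `P k (k+1)` are at least `c > 0`, then for
every nonempty set `B` with `π(B) ≤ 1/2` the flow satisfies
`F(B)/π(B) ≥ c/(2L)`, i.e. the conductance is at least `c/(2L)`. -/
theorem conductance_of_monotone_line_walk (L : ℕ)
    (P : Matrix (Fin (L + 1)) (Fin (L + 1)) ℝ)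
    (π : Fin (L + 1) → ℝ)
    (hPnn : ∀ i j, 0 ≤ P i j) (hProw : ∀ i, ∑ j, P i j = 1)
    (hπpos : ∀ i, 0 < π i) (hπsum : ∑ i, π i = 1)
    (hrev : ∀ i j, π i * P i j = π j * P j i)
    (hπmono : ∀ i j : Fin (L + 1), i ≤ j → π j ≤ π i)
    (htri : ∀ i j : Fin (L + 1), ((i : ℕ) + 1 < (j : ℕ) ∨ (j : ℕ) + 1 < (i : ℕ)) →
      P i j = 0)
    (c : ℝ) (hc : 0 < c)
    (hnb : ∀ k : Fin L, c ≤ P k.castSucc k.succ) :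
    ∀ B : Finset (Fin (L + 1)), B.Nonempty → (∑ i ∈ B, π i) ≤ 1 / 2 →
      (c / (2 * L)) * (∑ i ∈ B, π i) ≤ ∑ i ∈ B, ∑ j ∈ Bᶜ, π i * P i j :=
  conductance_of_monotone_line_walk_general L P π hPnn hπpos hπsum hrev hπmono c hc hnb
end

section
/- Let P be a reversible stochastic matrix with stationary distribution π (all π_i > 0). Then the gap between the largest eigenvalue 1 of P and its second-largest eigenvalue is at least φ(P)^2 / 2, where φ(P) is the conductance of P. -/
/-!
Let `w` be an eigenvector for an eigenvalue `λ ≠ 1`. Since `π` is stationary, `π ⬝ᵥ w = 0`, so `w`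
takes both signs, and after replacing `w` by `-w` the set `{w > 0}` has `π`-mass at most `1/2`.
Put `u = w⁺`, `N = ∑ πᵢ uᵢ²` and `C = ∑ πᵢ Pᵢⱼ uᵢ uⱼ`; nonnegativity of `P` gives `λ N ≤ C`.
Cutting `u²` into its superlevel sets, all inside `{w > 0}`, the conductance bound yields
`2 φ N ≤ ∑ πᵢ Pᵢⱼ |uᵢ² - uⱼ²|`, and Cauchy–Schwarz applied to `uᵢ² - uⱼ² = (uᵢ - uⱼ)(uᵢ + uⱼ)`
bounds the right side by `2 √(N² - C²)`. So `φ² N² ≤ N² - C²`, which with `λ N ≤ C` gives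
`φ² ≤ 2 (1 - λ)`.
-/

section

open Finset Matrix

variable {ι : Type*} [Fintype ι]

lemma posPart_sub_eq_posPart_sub_max_add_posPart_sub_min (a b c : ℝ) :
    (a - b)⁺ = (max a c - max b c)⁺ + (min a c - min b c)⁺ := by
  rcases le_total a b with h | h
  · simp [max_le_max_right c h, min_le_min_right c h, h]
  · rw [posPart_of_nonneg (sub_nonneg.2 h), posPart_of_nonneg (sub_nonneg.2 (max_le_max_right c h)),
      posPart_of_nonneg (sub_nonneg.2 (min_le_min_right c h))]
    linarith [max_add_min a c, max_add_min b c]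

lemma sum_mul_posPart_sub_ite [DecidableEq ι] (Q : ι → ι → ℝ) (S : Finset ι) {c : ℝ}
    (hc : 0 ≤ c) :
    ∑ i, ∑ j, Q i j * ((if i ∈ S then c else 0) - if j ∈ S then c else 0)⁺ =
      c * ∑ i ∈ S, ∑ j ∈ Sᶜ, Q i j := by
  have hrow : ∀ i, ∑ j, Q i j * ((if i ∈ S then c else 0) - if j ∈ S then c else 0)⁺ =
      if i ∈ S then c * ∑ j ∈ Sᶜ, Q i j else 0 := by
    intro i
    by_cases hi : i ∈ S
    · simp only [hi, if_true]
      rw [← univ_inter Sᶜ, ← sum_ite_mem, mul_sum]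
      refine sum_congr rfl fun j _ => ?_
      by_cases hj : j ∈ S <;> simp [hj, hc, mul_comm]
    · simp only [hi, if_false]
      refine sum_eq_zero fun j _ => ?_
      by_cases hj : j ∈ S <;> simp [hj, hc]
  simp only [hrow, sum_ite_mem, univ_inter, mul_sum]

theorem mul_sum_le_sum_mul_posPart_sub_of_cut_bound [DecidableEq ι] (π : ι → ℝ)
    (Q : ι → ι → ℝ) (φ : ℝ) (g : ι → ℝ) (hg : 0 ≤ g)
    (hcut : ∀ B ⊆ univ.filter (fun i => 0 < g i), B.Nonempty →
      φ * ∑ i ∈ B, π i ≤ ∑ i ∈ B, ∑ j ∈ Bᶜ, Q i j) :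
    φ * ∑ i, π i * g i ≤ ∑ i, ∑ j, Q i j * (g i - g j)⁺ := by
  generalize hS : univ.filter (fun i => 0 < g i) = S at hcut
  induction S using Finset.strongInduction generalizing g with
  | H S ih =>
  have hmem : ∀ i, i ∈ S ↔ 0 < g i := by simp [← hS]
  rcases S.eq_empty_or_nonempty with rfl | hne
  · have hg0 : g = 0 := funext fun i => le_antisymm (by simpa using hmem i) (hg i)
    simp [hg0]
  -- Peel off the lowest level: `g = (max g c - c) + c • 𝟙_S` with `c` the least positive value.
  obtain ⟨i₀, hi₀, hmin⟩ := S.exists_min_image g hne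
  set c := g i₀
  have hc : 0 < c := (hmem i₀).1 hi₀
  have hlevel : ∀ i, min (g i) c = if i ∈ S then c else 0 := by
    intro i
    by_cases hi : i ∈ S
    · simp [hi, hmin i hi]
    · have : g i = 0 := le_antisymm (not_lt.1 (mt (hmem i).2 hi)) (hg i)
      simp [hi, this, hc.le]
  set g' : ι → ℝ := fun i => max (g i) c - c
  have hg' : 0 ≤ g' := fun i => sub_nonneg.2 (le_max_right _ _)
  have hsupp : univ.filter (fun i => 0 < g' i) ⊂ S := by
    refine ssubset_of_subset_of_ne (fun i hi => (hmem i).2 ?_) fun h => ?_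
    · simp only [g', mem_filter, mem_univ, true_and, sub_pos, lt_max_iff, lt_irrefl, or_false] at hi
      exact hc.trans hi
    · have hi₀' := h ▸ hi₀
      simp [g', c] at hi₀'
  have hflow_sub : ∀ i j, (g i - g j)⁺ =
      (g' i - g' j)⁺ + ((if i ∈ S then c else 0) - if j ∈ S then c else 0)⁺ := by
    intro i j
    rw [← hlevel, ← hlevel, posPart_sub_eq_posPart_sub_max_add_posPart_sub_min _ _ c]
    simp only [g', sub_sub_sub_cancel_right]
  have hmass : ∑ i, π i * g i = ∑ i, π i * g' i + c * ∑ i ∈ S, π i := by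
    have hsplit : ∀ i, π i * g i = π i * g' i + if i ∈ S then c * π i else 0 := by
      intro i
      rw [show g i = g' i + min (g i) c by simp only [g']; linarith [max_add_min (g i) c], hlevel]
      split_ifs <;> ring
    simp only [hsplit, sum_add_distrib, sum_ite_mem, univ_inter, mul_sum]
  have hflow : ∑ i, ∑ j, Q i j * (g i - g j)⁺ =
      ∑ i, ∑ j, Q i j * (g' i - g' j)⁺ + c * ∑ i ∈ S, ∑ j ∈ Sᶜ, Q i j := by
    simp only [hflow_sub, mul_add, sum_add_distrib, sum_mul_posPart_sub_ite Q S hc.le]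
  have hS' := ih _ hsupp g' hg' rfl fun B hB => hcut B (hB.trans hsupp.subset)
  have hcutS := hcut S subset_rfl hne
  calc φ * ∑ i, π i * g i = φ * ∑ i, π i * g' i + c * (φ * ∑ i ∈ S, π i) := by
        rw [hmass]; ring
    _ ≤ ∑ i, ∑ j, Q i j * (g' i - g' j)⁺ + c * ∑ i ∈ S, ∑ j ∈ Sᶜ, Q i j :=
      add_le_add hS' (mul_le_mul_of_nonneg_left hcutS hc.le)
    _ = ∑ i, ∑ j, Q i j * (g i - g j)⁺ := hflow.symm

lemma sum_mul_abs_sub_eq_two_mul_sum_mul_posPart_sub {Q : ι → ι → ℝ}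
    (hQ : ∀ i j, Q i j = Q j i) (g : ι → ℝ) :
    ∑ i, ∑ j, Q i j * |g i - g j| = 2 * ∑ i, ∑ j, Q i j * (g i - g j)⁺ := by
  have hneg : ∑ i, ∑ j, Q i j * (g i - g j)⁻ = ∑ i, ∑ j, Q i j * (g i - g j)⁺ := by
    rw [sum_comm]
    simp only [← posPart_neg, neg_sub, hQ]
  simp only [← posPart_add_negPart, mul_add, sum_add_distrib, hneg]
  ring

lemma sq_sum_mul_abs_sq_sub_sq_le {Q : ι → ι → ℝ} {π : ι → ℝ} (hQ : ∀ i j, Q i j = Q j i)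
    (hQ0 : ∀ i j, 0 ≤ Q i j) (hrow : ∀ i, ∑ j, Q i j = π i) (u : ι → ℝ) :
    (∑ i, ∑ j, Q i j * |u i ^ 2 - u j ^ 2|) ^ 2 ≤
      4 * ((∑ i, π i * u i ^ 2) ^ 2 - (∑ i, ∑ j, Q i j * (u i * u j)) ^ 2) := by
  have hleft : ∑ i, ∑ j, Q i j * u i ^ 2 = ∑ i, π i * u i ^ 2 := by
    simp only [← sum_mul, hrow]
  have hright : ∑ i, ∑ j, Q i j * u j ^ 2 = ∑ i, π i * u i ^ 2 := by
    rw [sum_comm, ← hleft]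
    exact sum_congr rfl fun i _ => sum_congr rfl fun j _ => by rw [hQ]
  have hminus : ∑ i, ∑ j, Q i j * (u i - u j) ^ 2 =
      2 * ∑ i, π i * u i ^ 2 - 2 * ∑ i, ∑ j, Q i j * (u i * u j) := by
    have hexp : ∀ i j, Q i j * (u i - u j) ^ 2 =
        Q i j * u i ^ 2 + Q i j * u j ^ 2 - 2 * (Q i j * (u i * u j)) := fun i j => by ring
    simp only [hexp, sum_add_distrib, sum_sub_distrib, ← mul_sum, hleft, hright]
    ring
  have hplus : ∑ i, ∑ j, Q i j * (u i + u j) ^ 2 =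
      2 * ∑ i, π i * u i ^ 2 + 2 * ∑ i, ∑ j, Q i j * (u i * u j) := by
    have hexp : ∀ i j, Q i j * (u i + u j) ^ 2 =
        Q i j * u i ^ 2 + Q i j * u j ^ 2 + 2 * (Q i j * (u i * u j)) := fun i j => by ring
    simp only [hexp, sum_add_distrib, ← mul_sum, hleft, hright]
    ring
  have hCS := sum_sq_le_sum_mul_sum_of_sq_le_mul (univ ×ˢ univ)
    (r := fun p => Q p.1 p.2 * |u p.1 ^ 2 - u p.2 ^ 2|)
    (f := fun p => Q p.1 p.2 * (u p.1 - u p.2) ^ 2)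
    (g := fun p => Q p.1 p.2 * (u p.1 + u p.2) ^ 2)
    (fun p _ => mul_nonneg (hQ0 _ _) (sq_nonneg _))
    (fun p _ => mul_nonneg (hQ0 _ _) (sq_nonneg _))
    (fun p _ => le_of_eq (by rw [mul_pow, sq_abs]; ring))
  simp only [sum_product, hminus, hplus] at hCS
  linarith

lemma le_one_sub_sq_div_two_of_sq_mul_le {lam φ N C : ℝ} (hN : 0 < N) (hC : lam * N ≤ C)
    (h : φ ^ 2 * N ^ 2 ≤ N ^ 2 - C ^ 2) : lam ≤ 1 - φ ^ 2 / 2 := by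
  have hN2 : 0 < N ^ 2 := by positivity
  rcases lt_or_ge lam 0 with hlam | hlam
  · have : φ ^ 2 ≤ 1 := by nlinarith [sq_nonneg C]
    linarith
  · have hC2 : (lam * N) ^ 2 ≤ C ^ 2 := pow_le_pow_left₀ (by positivity) hC 2
    have : φ ^ 2 ≤ 1 - lam ^ 2 := by nlinarith
    nlinarith [sq_nonneg (1 - lam)]

lemma vecMul_eq_of_reversible {P : Matrix ι ι ℝ} {π : ι → ℝ} (hProw : ∀ i, ∑ j, P i j = 1)
    (hrev : ∀ i j, π i * P i j = π j * P j i) : π ᵥ* P = π := by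
  funext j
  simp only [vecMul, dotProduct, hrev _ j, ← mul_sum, hProw, mul_one]

lemma dotProduct_eq_zero_of_mulVec_eq_smul {P : Matrix ι ι ℝ} {π w : ι → ℝ} {lam : ℝ}
    (hstat : π ᵥ* P = π) (heig : P *ᵥ w = lam • w) (hlam : lam ≠ 1) : π ⬝ᵥ w = 0 := by
  by_contra h
  refine hlam ((mul_eq_right₀ h).1 ?_)
  rw [← smul_eq_mul, ← dotProduct_smul, ← heig, dotProduct_mulVec, hstat]

lemma exists_pos_of_dotProduct_eq_zero {π w : ι → ℝ} (hπ : ∀ i, 0 < π i) (h : π ⬝ᵥ w = 0)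
    (hw : w ≠ 0) : ∃ i, 0 < w i := by
  by_contra! hle
  refine hw (funext fun i => ?_)
  have := (sum_eq_zero_iff_of_nonpos fun i _ =>
    mul_nonpos_of_nonneg_of_nonpos (hπ i).le (hle i)).1 h i (mem_univ i)
  exact (mul_eq_zero.1 this).resolve_left (hπ i).ne'

lemma sum_filter_pos_le_half_or {π : ι → ℝ} (hπ : ∀ i, 0 ≤ π i) (hsum : ∑ i, π i = 1)
    (w : ι → ℝ) :
    ∑ i ∈ univ.filter (fun i => 0 < w i), π i ≤ 1 / 2 ∨
      ∑ i ∈ univ.filter (fun i => 0 < (-w) i), π i ≤ 1 / 2 := by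
  classical
  have hdisj : Disjoint (univ.filter fun i => 0 < w i) (univ.filter fun i => 0 < (-w) i) :=
    disjoint_filter.2 fun i _ hpos hneg => by simp only [Pi.neg_apply, neg_pos] at hneg; linarith
  have := (sum_union hdisj).symm.trans_le (sum_le_univ_sum_of_nonneg (s := _ ∪ _) hπ)
  by_contra! h
  linarith

lemma mul_sum_mul_sq_posPart_le {P : Matrix ι ι ℝ} {π w : ι → ℝ} {lam : ℝ}
    (hπ : ∀ i, 0 ≤ π i) (hP : ∀ i j, 0 ≤ P i j) (heig : P *ᵥ w = lam • w) :
    lam * ∑ i, π i * (w i)⁺ ^ 2 ≤ ∑ i, ∑ j, π i * P i j * ((w i)⁺ * (w j)⁺) := by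
  rw [mul_sum]
  refine sum_le_sum fun i _ => ?_
  rcases le_or_gt (w i) 0 with hwi | hwi
  · simp [posPart_eq_zero.2 hwi]
  have hrow : lam * w i ≤ ∑ j, P i j * (w j)⁺ := by
    have := congrFun heig i
    simp only [mulVec, dotProduct, Pi.smul_apply, smul_eq_mul] at this
    rw [← this]
    exact sum_le_sum fun j _ => mul_le_mul_of_nonneg_left (le_posPart _) (hP i j)
  rw [posPart_of_nonneg hwi.le]
  calc lam * (π i * w i ^ 2) = π i * w i * (lam * w i) := by ring
    _ ≤ π i * w i * ∑ j, P i j * (w j)⁺ :=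
      mul_le_mul_of_nonneg_left hrow (mul_nonneg (hπ i) hwi.le)
    _ = ∑ j, π i * P i j * (w i * (w j)⁺) := by
      rw [mul_sum]; exact sum_congr rfl fun j _ => by ring

theorem le_one_sub_sq_div_two_of_mulVec_eq_smul [DecidableEq ι] {P : Matrix ι ι ℝ}
    {π : ι → ℝ} (hπ : ∀ i, 0 < π i) (hP : ∀ i j, 0 ≤ P i j) (hProw : ∀ i, ∑ j, P i j = 1)
    (hrev : ∀ i j, π i * P i j = π j * P j i) {φ : ℝ} (hφ0 : 0 ≤ φ)
    (hφ : ∀ B : Finset ι, B.Nonempty → (∑ i ∈ B, π i) ≤ 1 / 2 →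
      φ * (∑ i ∈ B, π i) ≤ ∑ i ∈ B, ∑ j ∈ Bᶜ, π i * P i j)
    {lam : ℝ} {w : ι → ℝ} (heig : P *ᵥ w = lam • w) (hpos : ∃ i, 0 < w i)
    (hhalf : ∑ i ∈ univ.filter (fun i => 0 < w i), π i ≤ 1 / 2) :
    lam ≤ 1 - φ ^ 2 / 2 := by
  set u : ι → ℝ := fun i => (w i)⁺
  set N := ∑ i, π i * u i ^ 2
  set C := ∑ i, ∑ j, π i * P i j * (u i * u j)
  have hN : 0 < N := by
    obtain ⟨i, hi⟩ := hpos
    refine sum_pos' (fun i _ => mul_nonneg (hπ i).le (sq_nonneg _)) ⟨i, mem_univ i, ?_⟩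
    exact mul_pos (hπ i) (pow_pos (posPart_pos hi) 2)
  have hsupp : univ.filter (fun i => 0 < u i ^ 2) ⊆ univ.filter (fun i => 0 < w i) := by
    intro i hi
    simp only [mem_filter, mem_univ, true_and] at hi ⊢
    by_contra! hwi
    simp [u, posPart_eq_zero.2 hwi] at hi
  have hcut : 2 * φ * N ≤ ∑ i, ∑ j, π i * P i j * |u i ^ 2 - u j ^ 2| := by
    have := mul_sum_le_sum_mul_posPart_sub_of_cut_bound π (fun i j => π i * P i j) φ
      (fun i => u i ^ 2) (fun i => sq_nonneg _) fun B hB hne => hφ B hne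
        ((sum_le_sum_of_subset_of_nonneg (hB.trans hsupp) fun i _ _ => (hπ i).le).trans hhalf)
    rw [sum_mul_abs_sub_eq_two_mul_sum_mul_posPart_sub hrev]
    linarith
  have hCS := sq_sum_mul_abs_sq_sub_sq_le hrev (fun i j => mul_nonneg (hπ i).le (hP i j))
    (fun i => by rw [← mul_sum, hProw, mul_one]) u
  refine le_one_sub_sq_div_two_of_sq_mul_le hN
    (mul_sum_mul_sq_posPart_le (fun i => (hπ i).le) hP heig) ?_
  nlinarith [pow_le_pow_left₀ (by positivity) hcut 2]

end

open Finset in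
/-- **The conductance bound** (Jerrum–Sinclair): for a reversible stochastic matrix `P`
with stationary distribution `π`, if `φ ≥ 0` is a lower bound on the conductance
(`φ·π(B) ≤ F(B)` for every nonempty `B` with `π(B) ≤ 1/2`), then every eigenvalue of
`P` other than `1` is at most `1 - φ²/2`; i.e. the gap between the largest eigenvalue
`1` and the second largest eigenvalue is at least `φ²/2`. -/
theorem conductance_eigenvalue_gap (n : ℕ)
    (P : Matrix (Fin n) (Fin n) ℝ)
    (π : Fin n → ℝ)
    (hπpos : ∀ i, 0 < π i) (hπsum : ∑ i, π i = 1)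
    (hPnn : ∀ i j, 0 ≤ P i j) (hProw : ∀ i, ∑ j, P i j = 1)
    (hrev : ∀ i j, π i * P i j = π j * P j i)
    (φ : ℝ) (hφ0 : 0 ≤ φ)
    (hφ : ∀ B : Finset (Fin n), B.Nonempty → (∑ i ∈ B, π i) ≤ 1 / 2 →
      φ * (∑ i ∈ B, π i) ≤ ∑ i ∈ B, ∑ j ∈ Bᶜ, π i * P i j) :
    ∀ (lam : ℝ) (w : Fin n → ℝ), w ≠ 0 → P.mulVec w = lam • w →
      lam = 1 ∨ lam ≤ 1 - φ ^ 2 / 2 := by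
  intro lam w hw heig
  refine or_iff_not_imp_left.2 fun hlam => ?_
  have hmean :=
    dotProduct_eq_zero_of_mulVec_eq_smul (vecMul_eq_of_reversible hProw hrev) heig hlam
  rcases sum_filter_pos_le_half_or (fun i => (hπpos i).le) hπsum w with hhalf | hhalf
  · exact le_one_sub_sq_div_two_of_mulVec_eq_smul hπpos hPnn hProw hrev hφ0 hφ heig
      (exists_pos_of_dotProduct_eq_zero hπpos hmean hw) hhalf
  · have hmean' : π ⬝ᵥ -w = 0 := by rw [dotProduct_neg, hmean, neg_zero]
    exact le_one_sub_sq_div_two_of_mulVec_eq_smul hπpos hPnn hProw hrev hφ0 hφ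
      (by rw [Matrix.mulVec_neg, heig, smul_neg])
      (exists_pos_of_dotProduct_eq_zero hπpos hmean' (neg_ne_zero.2 hw)) hhalf
end

section
/- Let H = H_1 + H_2 be a sum of two Hermitian operators on a finite-dimensional Hilbert space H = S ⊕ S^⊥, where H_2 vanishes on S (S is contained in the zero eigenspace of H_2) and every eigenvalue of H_2 on S^⊥ is at least J, with J > 2K where K = ‖H_1‖ (operator norm). Let a be the smallest eigenvalue of the restriction Π_S H Π_S to S, and a' the smallest eigenvalue of H. Then a - K²/(J - 2K) ≤ a' ≤ a. -/
/-!
Taking a trial ground state of the restriction to `S` gives `a' ≤ a`. Conversely, split a ground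
state of `H` as `y + z` with `y ∈ S`, `z ∈ Sᗮ`, `‖y‖² + ‖z‖² = 1`. Since `H₂` is self-adjoint and
kills `S`, only `⟪z, H₂ z⟫ ≥ J‖z‖²` survives from `H₂`, while the `H₁` cross terms cost at most
`2K‖y‖‖z‖ + K‖z‖²`. With `a ≤ K` this leaves `a - a' ≤ 2Kt - (J - 2K)t²` for `t = ‖z‖`, whose
maximum over `t` is `K²/(J - 2K)`.
-/

open RCLike
open scoped InnerProductSpace

section

variable {𝕜 E : Type*} [RCLike 𝕜] [NormedAddCommGroup E] [InnerProductSpace 𝕜 E]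

theorem ContinuousLinearMap.abs_re_inner_map_le (T : E →L[𝕜] E) (u v : E) :
    |re ⟪u, T v⟫_𝕜| ≤ ‖T‖ * ‖u‖ * ‖v‖ :=
  calc |re ⟪u, T v⟫_𝕜| ≤ ‖u‖ * ‖T v‖ := (abs_re_le_norm _).trans (norm_inner_le_norm _ _)
    _ ≤ ‖u‖ * (‖T‖ * ‖v‖) := by gcongr; exact T.le_opNorm v
    _ = ‖T‖ * ‖u‖ * ‖v‖ := by ring

theorem ContinuousLinearMap.re_inner_map_add_self_ge (T : E →L[𝕜] E) (y z : E) :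
    re ⟪y, T y⟫_𝕜 - 2 * ‖T‖ * ‖y‖ * ‖z‖ - ‖T‖ * ‖z‖ ^ 2 ≤ re ⟪y + z, T (y + z)⟫_𝕜 := by
  have hyz := abs_le.mp (T.abs_re_inner_map_le y z)
  have hzy := abs_le.mp (T.abs_re_inner_map_le z y)
  have hzz := abs_le.mp (T.abs_re_inner_map_le z z)
  simp only [map_add, inner_add_left, inner_add_right]
  linarith [hyz.1, hzy.1, hzz.1]

theorem LinearMap.IsSymmetric.inner_map_add_self_eq {T : E →ₗ[𝕜] E} (hT : T.IsSymmetric) {y : E}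
    (hy : T y = 0) (z : E) : ⟪y + z, T (y + z)⟫_𝕜 = ⟪z, T z⟫_𝕜 := by
  rw [map_add, hy, zero_add, inner_add_left, ← hT, hy, inner_zero_left, zero_add]

theorem ContinuousLinearMap.mul_norm_sq_le_re_inner_map_self {T : E →L[𝕜] E} {S : Submodule 𝕜 E}
    {a : ℝ} (ha : ∀ x ∈ S, ‖x‖ = 1 → a ≤ re ⟪x, T x⟫_𝕜) {x : E} (hx : x ∈ S) :
    a * ‖x‖ ^ 2 ≤ re ⟪x, T x⟫_𝕜 := by
  rcases eq_or_ne x 0 with rfl | hx0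
  · simp
  have hnx : ‖x‖ ≠ 0 := norm_ne_zero_iff.mpr hx0
  have hu := ha (((‖x‖⁻¹ : ℝ) : 𝕜) • x) (S.smul_mem _ hx) (by
    rw [norm_smul, norm_algebraMap', norm_inv, norm_norm, inv_mul_cancel₀ hnx])
  rw [map_smul, inner_smul_real_left, inner_smul_real_right, smul_smul, smul_re, ← mul_inv,
    ← sq, inv_mul_eq_div, le_div_iff₀ (by positivity)] at hu
  exact hu

theorem re_inner_map_add_self_ge_of_spectral_gap {H₁ H₂ : E →L[𝕜] E} {S : Submodule 𝕜 E}
    {J a : ℝ} (hH₂ : (H₂ : E →ₗ[𝕜] E).IsSymmetric) (hS : ∀ x ∈ S, H₂ x = 0)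
    (hSperp : ∀ x ∈ Sᗮ, J * ‖x‖ ^ 2 ≤ re ⟪x, H₂ x⟫_𝕜)
    (ha : ∀ x ∈ S, ‖x‖ = 1 → a ≤ re ⟪x, (H₁ + H₂) x⟫_𝕜) {y z : E} (hy : y ∈ S) (hz : z ∈ Sᗮ) :
    a * ‖y‖ ^ 2 - 2 * ‖H₁‖ * ‖y‖ * ‖z‖ - ‖H₁‖ * ‖z‖ ^ 2 + J * ‖z‖ ^ 2 ≤
      re ⟪y + z, (H₁ + H₂) (y + z)⟫_𝕜 := by
  have hSy : a * ‖y‖ ^ 2 ≤ re ⟪y, H₁ y⟫_𝕜 := by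
    simpa [hS y hy] using ContinuousLinearMap.mul_norm_sq_le_re_inner_map_self ha hy
  have hH₂yz : ⟪y + z, H₂ (y + z)⟫_𝕜 = ⟪z, H₂ z⟫_𝕜 := hH₂.inner_map_add_self_eq (hS y hy) z
  rw [add_apply, inner_add_right, map_add, hH₂yz]
  linarith [H₁.re_inner_map_add_self_ge y z, hSperp z hz]

end

theorem sub_sq_div_le_of_sq_add_sq_eq_one {a K J s t : ℝ} (hK : 0 ≤ K) (haK : a ≤ K)
    (hJ : 2 * K < J) (ht : 0 ≤ t) (hst : s ^ 2 + t ^ 2 = 1) :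
    a - K ^ 2 / (J - 2 * K) ≤ a * s ^ 2 - 2 * K * s * t - K * t ^ 2 + J * t ^ 2 := by
  have hc : 0 < J - 2 * K := by linarith
  have hs : s ≤ 1 := by nlinarith
  have hgap : a - (a * s ^ 2 - 2 * K * s * t - K * t ^ 2 + J * t ^ 2) ≤
      2 * K * t - (J - 2 * K) * t ^ 2 := by
    nlinarith [mul_nonneg (sub_nonneg.mpr haK) (sq_nonneg t),
      mul_nonneg (mul_nonneg hK ht) (sub_nonneg.mpr hs)]
  have hsq : 2 * K * t - (J - 2 * K) * t ^ 2 ≤ K ^ 2 / (J - 2 * K) := by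
    rw [le_div_iff₀ hc]; nlinarith [sq_nonneg ((J - 2 * K) * t - K)]
  linarith

theorem leakage_lemma_ground_energy_general (n : ℕ)
    (H₁ H₂ : EuclideanSpace ℂ (Fin n) →L[ℂ] EuclideanSpace ℂ (Fin n))
    (hH₂ : IsSelfAdjoint H₂)
    (S : Submodule ℂ (EuclideanSpace ℂ (Fin n)))
    (hS : ∀ x ∈ S, H₂ x = 0)
    (J K : ℝ) (hK : K = ‖H₁‖) (hJ : 2 * K < J)
    (hSperp : ∀ x ∈ Sᗮ, J * ‖x‖ ^ 2 ≤ (inner ℂ x (H₂ x) : ℂ).re)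
    (a a' : ℝ)
    (ha_min : ∀ x ∈ S, ‖x‖ = 1 → a ≤ (inner ℂ x ((H₁ + H₂) x) : ℂ).re)
    (ha_mem : ∃ x ∈ S, ‖x‖ = 1 ∧ (inner ℂ x ((H₁ + H₂) x) : ℂ).re = a)
    (ha'_min : ∀ x : EuclideanSpace ℂ (Fin n), ‖x‖ = 1 →
      a' ≤ (inner ℂ x ((H₁ + H₂) x) : ℂ).re)
    (ha'_mem : ∃ x : EuclideanSpace ℂ (Fin n), ‖x‖ = 1 ∧
      (inner ℂ x ((H₁ + H₂) x) : ℂ).re = a') :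
    a - K ^ 2 / (J - 2 * K) ≤ a' ∧ a' ≤ a := by
  subst hK
  obtain ⟨x₀, hx₀S, hx₀, rfl⟩ := ha_mem
  obtain ⟨x, hx, rfl⟩ := ha'_mem
  refine ⟨?_, ha'_min x₀ hx₀⟩
  have ha_le : (inner ℂ x₀ ((H₁ + H₂) x₀) : ℂ).re ≤ ‖H₁‖ := by
    simpa [hS x₀ hx₀S, hx₀] using (abs_le.mp (H₁.abs_re_inner_map_le x₀ x₀)).2
  obtain ⟨y, hy, z, hz, rfl⟩ := S.exists_add_mem_mem_orthogonal x
  have hyz : ‖y‖ ^ 2 + ‖z‖ ^ 2 = 1 := by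
    rw [sq, sq, ← norm_add_sq_eq_norm_sq_add_norm_sq_of_inner_eq_zero (𝕜 := ℂ) y z
      (Submodule.inner_right_of_mem_orthogonal hy hz), hx, one_mul]
  calc _ ≤ _ := sub_sq_div_le_of_sq_add_sq_eq_one (norm_nonneg H₁) ha_le hJ (norm_nonneg z) hyz
    _ ≤ _ := re_inner_map_add_self_ge_of_spectral_gap hH₂.isSymmetric hS hSperp ha_min hy hz

/-- **Leakage lemma, ground energy part.** Let `H = H₁ + H₂` be a sum of two Hermitian
operators on a finite-dimensional Hilbert space, where `H₂` vanishes on a subspace `S`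
and is at least `J` on `Sᗮ`, with `J > 2K`, `K = ‖H₁‖`. If `a` is the smallest
eigenvalue of the restriction `Π_S H Π_S` to `S` (characterized as the minimum of the
Rayleigh quotient over unit vectors of `S`) and `a'` the smallest eigenvalue of `H`,
then `a - K²/(J - 2K) ≤ a' ≤ a`. -/
theorem leakage_lemma_ground_energy (n : ℕ)
    (H₁ H₂ : EuclideanSpace ℂ (Fin n) →L[ℂ] EuclideanSpace ℂ (Fin n))
    (hH₁ : IsSelfAdjoint H₁) (hH₂ : IsSelfAdjoint H₂)
    (S : Submodule ℂ (EuclideanSpace ℂ (Fin n)))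
    (hS : ∀ x ∈ S, H₂ x = 0)
    (J K : ℝ) (hK : K = ‖H₁‖) (hJ : 2 * K < J)
    (hSperp : ∀ x ∈ Sᗮ, J * ‖x‖ ^ 2 ≤ (inner ℂ x (H₂ x) : ℂ).re)
    (a a' : ℝ)
    (ha_min : ∀ x ∈ S, ‖x‖ = 1 → a ≤ (inner ℂ x ((H₁ + H₂) x) : ℂ).re)
    (ha_mem : ∃ x ∈ S, ‖x‖ = 1 ∧ (inner ℂ x ((H₁ + H₂) x) : ℂ).re = a)
    (ha'_min : ∀ x : EuclideanSpace ℂ (Fin n), ‖x‖ = 1 →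
      a' ≤ (inner ℂ x ((H₁ + H₂) x) : ℂ).re)
    (ha'_mem : ∃ x : EuclideanSpace ℂ (Fin n), ‖x‖ = 1 ∧
      (inner ℂ x ((H₁ + H₂) x) : ℂ).re = a') :
    a - K ^ 2 / (J - 2 * K) ≤ a' ∧ a' ≤ a :=
  leakage_lemma_ground_energy_general n H₁ H₂ hH₂ S hS J K hK hJ hSperp a a' ha_min ha_mem ha'_min
    ha'_mem
end

section
/- Let H_1 and H_2 be positive semidefinite Hermitian operators on a finite-dimensional Hilbert space, with ground energies a_1 and a_2 respectively, and suppose for each the gap between the ground-space energy and the next eigenvalue is more than Λ. If the angle between the two ground spaces is θ (i.e., cos θ = max{|⟨u|v⟩| : u in ground space of H_1, v in ground space of H_2, unit vectors}), then the smallest eigenvalue of H_1 + H_2 is at least a_1 + a_2 + 2Λ sin²(θ/2). -/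
/-!
Split a unit vector `x` along each ground space `Gᵢ`, with orthogonal projection `Pᵢ`. Since `Gᵢ`
is an eigenspace and the gap bounds the energy on `Gᵢᗮ`, `Hᵢ` contributes at least
`aᵢ + Λ ‖x - Pᵢ x‖²`. It remains to see that `x` cannot be close to both ground spaces. Put
`s = ‖P₁ x‖² + ‖P₂ x‖²`; as `⟪Pᵢ x, x⟫ = ‖Pᵢ x‖²`, we get `s = re ⟪P₁ x + P₂ x, x⟫ ≤ ‖P₁ x + P₂ x‖`,
while the angle bound gives `‖P₁ x + P₂ x‖² ≤ (1 + cos θ) s`. Hence `s ≤ 1 + cos θ`, and the two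
penalties add up to at least `Λ (1 - cos θ) = 2 Λ sin² (θ / 2)`.
-/

open RCLike

namespace LinearMap.IsSymmetric

variable {𝕜 E : Type*} [RCLike 𝕜] [NormedAddCommGroup E] [InnerProductSpace 𝕜 E]
  {T : E →ₗ[𝕜] E} {K : Submodule 𝕜 E} [K.HasOrthogonalProjection] {a : ℝ}

theorem re_inner_map_self_eq_of_eigenspace (hT : T.IsSymmetric)
    (hK : ∀ x ∈ K, T x = (a : 𝕜) • x) (x : E) :
    re (inner 𝕜 x (T x)) = a * ‖K.starProjection x‖ ^ 2 +
      re (inner 𝕜 (Kᗮ.starProjection x) (T (Kᗮ.starProjection x))) := by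
  set u := K.starProjection x
  set w := Kᗮ.starProjection x
  have hu : u ∈ K := K.starProjection_apply_mem x
  have hw : w ∈ Kᗮ := Kᗮ.starProjection_apply_mem x
  have hwu : inner 𝕜 w u = 0 := Submodule.inner_left_of_mem_orthogonal hu hw
  have huTw : inner 𝕜 u (T w) = 0 := by
    rw [← hT, hK u hu, inner_smul_left, Submodule.inner_right_of_mem_orthogonal hu hw, mul_zero]
  have hx : u + w = x := K.starProjection_add_starProjection_orthogonal x
  clear_value u w
  subst hx
  rw [map_add, hK u hu]
  simp only [inner_add_left, inner_add_right, inner_smul_right, hwu, huTw,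
    inner_self_eq_norm_sq_to_K, add_zero, map_add, zero_add]
  norm_cast

theorem le_re_inner_map_self_of_gap (hT : T.IsSymmetric) (hK : ∀ x ∈ K, T x = (a : 𝕜) • x)
    {Λ : ℝ} (hgap : ∀ x ∈ Kᗮ, (a + Λ) * ‖x‖ ^ 2 ≤ re (inner 𝕜 x (T x))) (x : E) :
    a * ‖x‖ ^ 2 + Λ * ‖Kᗮ.starProjection x‖ ^ 2 ≤ re (inner 𝕜 x (T x)) := by
  have hgap' := hgap _ (Kᗮ.starProjection_apply_mem x)
  rw [hT.re_inner_map_self_eq_of_eigenspace hK x, K.norm_sq_eq_add_norm_sq_starProjection x]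
  linarith

end LinearMap.IsSymmetric

namespace Submodule

variable {𝕜 E : Type*} [RCLike 𝕜] [NormedAddCommGroup E] [InnerProductSpace 𝕜 E]
  {K L : Submodule 𝕜 E} {c : ℝ}

theorem norm_inner_le_mul_norm_mul_norm_of_unit
    (h : ∀ u ∈ K, ∀ v ∈ L, ‖u‖ = 1 → ‖v‖ = 1 → ‖inner 𝕜 u v‖ ≤ c)
    {u v : E} (hu : u ∈ K) (hv : v ∈ L) : ‖inner 𝕜 u v‖ ≤ c * (‖u‖ * ‖v‖) := by
  rcases eq_or_ne u 0 with rfl | hu0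
  · simp
  rcases eq_or_ne v 0 with rfl | hv0
  · simp
  have hunit := h _ (K.smul_mem _ hu) _ (L.smul_mem _ hv)
    (norm_smul_inv_norm (𝕜 := 𝕜) hu0) (norm_smul_inv_norm (𝕜 := 𝕜) hv0)
  rw [inner_smul_left, inner_smul_right, norm_mul, norm_mul, RCLike.norm_conj, norm_inv, norm_inv,
    norm_ofReal, norm_ofReal, abs_norm, abs_norm, ← mul_assoc, ← mul_inv,
    inv_mul_le_iff₀ (by positivity)] at hunit
  linarith

variable [K.HasOrthogonalProjection] [L.HasOrthogonalProjection]

theorem sq_norm_starProjection_add_sq_norm_starProjection_le (hc : 0 ≤ c)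
    (h : ∀ u ∈ K, ∀ v ∈ L, ‖inner 𝕜 u v‖ ≤ c * (‖u‖ * ‖v‖)) (x : E) :
    ‖K.starProjection x‖ ^ 2 + ‖L.starProjection x‖ ^ 2 ≤ (1 + c) * ‖x‖ ^ 2 := by
  set u := K.starProjection x
  set v := L.starProjection x
  set s := ‖u‖ ^ 2 + ‖v‖ ^ 2
  have hs : s = re (inner 𝕜 (u + v) x) := by
    rw [inner_add_left, map_add, K.re_inner_starProjection_eq_normSq,
      L.re_inner_starProjection_eq_normSq]
    rfl
  have huv : ‖u + v‖ ^ 2 ≤ (1 + c) * s := by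
    have hre : re (inner 𝕜 u v) ≤ c * (‖u‖ * ‖v‖) :=
      (re_le_norm _).trans (h u (K.starProjection_apply_mem x) v (L.starProjection_apply_mem x))
    rw [norm_add_sq (𝕜 := 𝕜)]
    nlinarith [sq_nonneg (‖u‖ - ‖v‖)]
  have hsx : s ≤ ‖u + v‖ * ‖x‖ := hs ▸ (re_le_norm _).trans (norm_inner_le_norm _ _)
  have hsq : s * s ≤ s * ((1 + c) * ‖x‖ ^ 2) := by
    nlinarith [mul_self_le_mul_self (by positivity) hsx]
  rcases (show 0 ≤ s by positivity).eq_or_lt with hs0 | hs0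
  · rw [← hs0]; positivity
  · exact le_of_mul_le_mul_left hsq hs0

end Submodule

theorem kitaev_geometrical_lemma_general (n : ℕ)
    (H₁ H₂ : EuclideanSpace ℂ (Fin n) →L[ℂ] EuclideanSpace ℂ (Fin n))
    (hH₁ : IsSelfAdjoint H₁) (hH₂ : IsSelfAdjoint H₂)
    (G₁ G₂ : Submodule ℂ (EuclideanSpace ℂ (Fin n)))
    (a₁ a₂ Λ θ : ℝ) (hΛ : 0 ≤ Λ)
    (hθ0 : 0 ≤ θ) (hθ1 : θ ≤ Real.pi / 2)
    (hG₁ : ∀ x ∈ G₁, H₁ x = (a₁ : ℂ) • x)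
    (hgap₁ : ∀ x ∈ G₁ᗮ, (a₁ + Λ) * ‖x‖ ^ 2 ≤ (inner ℂ x (H₁ x) : ℂ).re)
    (hG₂ : ∀ x ∈ G₂, H₂ x = (a₂ : ℂ) • x)
    (hgap₂ : ∀ x ∈ G₂ᗮ, (a₂ + Λ) * ‖x‖ ^ 2 ≤ (inner ℂ x (H₂ x) : ℂ).re)
    (hangle : ∀ u ∈ G₁, ∀ v ∈ G₂, ‖u‖ = 1 → ‖v‖ = 1 →
      ‖(inner ℂ u v : ℂ)‖ ≤ Real.cos θ) :
    ∀ x : EuclideanSpace ℂ (Fin n), ‖x‖ = 1 →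
      a₁ + a₂ + 2 * Λ * Real.sin (θ / 2) ^ 2 ≤ (inner ℂ x ((H₁ + H₂) x) : ℂ).re := by
  intro x hx
  have hcos : 0 ≤ Real.cos θ := Real.cos_nonneg_of_mem_Icc ⟨by linarith, hθ1⟩
  have hproj := Submodule.sq_norm_starProjection_add_sq_norm_starProjection_le hcos
    (fun u hu v hv ↦ Submodule.norm_inner_le_mul_norm_mul_norm_of_unit hangle hu hv) x
  have h₁ := hH₁.isSymmetric.le_re_inner_map_self_of_gap hG₁ hgap₁ x
  have h₂ := hH₂.isSymmetric.le_re_inner_map_self_of_gap hG₂ hgap₂ x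
  have hsin : 2 * Λ * Real.sin (θ / 2) ^ 2 = Λ * (1 - Real.cos θ) := by
    have hcos_double := Real.cos_two_mul_eq_one_sub (θ / 2)
    rw [mul_div_cancel₀ θ two_ne_zero] at hcos_double
    rw [hcos_double]
    ring
  have horth : 1 - Real.cos θ ≤ ‖G₁ᗮ.starProjection x‖ ^ 2 + ‖G₂ᗮ.starProjection x‖ ^ 2 := by
    have hP₁ := G₁.norm_sq_eq_add_norm_sq_starProjection x
    have hP₂ := G₂.norm_sq_eq_add_norm_sq_starProjection x
    rw [hx] at hP₁ hP₂ hproj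
    linarith
  simp only [hx, RCLike.re_to_complex, ContinuousLinearMap.coe_coe] at h₁ h₂
  rw [add_apply, inner_add_right, Complex.add_re]
  linarith [mul_le_mul_of_nonneg_left horth hΛ]

/-- **Kitaev's geometrical lemma.** Let `H₁, H₂` be positive semidefinite Hermitian
operators on a finite-dimensional Hilbert space with ground energies `a₁, a₂` and
ground spaces `G₁, G₂`, such that for each the gap between the ground-space energy and
the rest of the spectrum is at least `Λ`. If the angle `θ` between the two ground
spaces satisfies `|⟨u|v⟩| ≤ cos θ` for all unit `u ∈ G₁`, `v ∈ G₂`, then the smallest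
eigenvalue of `H₁ + H₂` is at least `a₁ + a₂ + 2Λ·sin²(θ/2)`. -/
theorem kitaev_geometrical_lemma (n : ℕ)
    (H₁ H₂ : EuclideanSpace ℂ (Fin n) →L[ℂ] EuclideanSpace ℂ (Fin n))
    (hH₁ : IsSelfAdjoint H₁) (hH₂ : IsSelfAdjoint H₂)
    (hpsd₁ : ∀ x, 0 ≤ (inner ℂ x (H₁ x) : ℂ).re)
    (hpsd₂ : ∀ x, 0 ≤ (inner ℂ x (H₂ x) : ℂ).re)
    (G₁ G₂ : Submodule ℂ (EuclideanSpace ℂ (Fin n)))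
    (a₁ a₂ Λ θ : ℝ) (hΛ : 0 ≤ Λ)
    (hθ0 : 0 ≤ θ) (hθ1 : θ ≤ Real.pi / 2)
    (hG₁ : ∀ x ∈ G₁, H₁ x = (a₁ : ℂ) • x)
    (ha₁ : ∀ x, a₁ * ‖x‖ ^ 2 ≤ (inner ℂ x (H₁ x) : ℂ).re)
    (hgap₁ : ∀ x ∈ G₁ᗮ, (a₁ + Λ) * ‖x‖ ^ 2 ≤ (inner ℂ x (H₁ x) : ℂ).re)
    (hG₂ : ∀ x ∈ G₂, H₂ x = (a₂ : ℂ) • x)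
    (ha₂ : ∀ x, a₂ * ‖x‖ ^ 2 ≤ (inner ℂ x (H₂ x) : ℂ).re)
    (hgap₂ : ∀ x ∈ G₂ᗮ, (a₂ + Λ) * ‖x‖ ^ 2 ≤ (inner ℂ x (H₂ x) : ℂ).re)
    (hangle : ∀ u ∈ G₁, ∀ v ∈ G₂, ‖u‖ = 1 → ‖v‖ = 1 →
      ‖(inner ℂ u v : ℂ)‖ ≤ Real.cos θ) :
    ∀ x : EuclideanSpace ℂ (Fin n), ‖x‖ = 1 →
      a₁ + a₂ + 2 * Λ * Real.sin (θ / 2) ^ 2 ≤ (inner ℂ x ((H₁ + H₂) x) : ℂ).re :=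
  kitaev_geometrical_lemma_general n H₁ H₂ hH₁ hH₂ G₁ G₂ a₁ a₂ Λ θ hΛ hθ0 hθ1 hG₁ hgap₁ hG₂ hgap₂
    hangle
end

section
/- Let M = diag(1, 0, ..., 0) be the (L+1)×(L+1) matrix with a single 1 in the top-left entry, and let H be a real symmetric positive semidefinite (L+1)×(L+1) matrix with unique ground state v (eigenvalue a) that is monotone non-increasing with positive entries (v_0 ≥ v_1 ≥ ... ≥ v_L > 0, ‖v‖ = 1) and spectral gap at least Δ. Then the angle θ between the ground space of H and the ground space of M (the span of e_1,...,e_L, i.e. vectors with first coordinate 0) satisfies cos θ ≤ sqrt(1 - 1/(L+1)), and consequently the smallest eigenvalue of H + M is at least a + Δ/(L+1) · c for an absolute constant c > 0. -/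
open scoped Matrix

set_option maxHeartbeats 800000 in
lemma key_ineq (Δ γ c v0 y0 s : ℝ) (hΔ0 : 0 ≤ Δ) (hΔ1 : Δ ≤ 1)
    (hγ0 : 0 ≤ γ) (hs0 : 0 ≤ s) (hv0 : 0 ≤ v0)
    (hgv : γ ^ 2 + v0 ^ 2 = 1) (hsc : s ^ 2 + c ^ 2 = 1)
    (hy0 : y0 ^ 2 ≤ s ^ 2 * γ ^ 2) :
    Δ * (1 - γ) ≤ Δ * s ^ 2 + (c * v0 + y0) ^ 2 := by
  have hγ1 : γ ≤ 1 := by nlinarith [sq_nonneg v0]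
  have hca : |c| ^ 2 = c ^ 2 := sq_abs c
  have hc0 : 0 ≤ |c| := abs_nonneg c
  have e1 : c ^ 2 = 1 - s ^ 2 := by linarith
  have e2 : v0 ^ 2 = 1 - γ ^ 2 := by linarith
  -- Cauchy-Schwarz in ℝ²
  have key : 2 * s * |c| * v0 ≤ 1 - γ * (1 - 2 * s ^ 2) := by
    have h1 : (γ * (1 - 2 * s ^ 2) + v0 * (2 * s * |c|)) ^ 2 ≤
        (γ ^ 2 + v0 ^ 2) * ((1 - 2 * s ^ 2) ^ 2 + (2 * s * |c|) ^ 2) := by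
      nlinarith [sq_nonneg (γ * (2 * s * |c|) - v0 * (1 - 2 * s ^ 2))]
    have h2 : (1 - 2 * s ^ 2) ^ 2 + (2 * s * |c|) ^ 2 = 1 := by nlinarith
    nlinarith [sq_nonneg (γ * (1 - 2 * s ^ 2) + v0 * (2 * s * |c|) + 1)]
  by_cases h : |c| * v0 ≤ s * γ
  · -- large angle case: s² ≥ v0² ≥ 1 - γ
    have hcs : (|c| * v0) ^ 2 ≤ (s * γ) ^ 2 := by
      have := mul_le_mul h h (by positivity) (by positivity)
      nlinarith
    have hv0s : v0 ^ 2 ≤ s ^ 2 := by nlinarith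
    have h7 : 1 - γ ≤ s ^ 2 := by nlinarith
    nlinarith [sq_nonneg (c * v0 + y0), mul_le_mul_of_nonneg_left h7 hΔ0]
  · push_neg at h
    have habsy : |y0| ≤ s * γ := by
      have h5 : y0 ^ 2 ≤ (s * γ) ^ 2 := by nlinarith
      have := Real.sqrt_le_sqrt h5
      rwa [Real.sqrt_sq_eq_abs, Real.sqrt_sq (by positivity)] at this
    have hcv : |c * v0| = |c| * v0 := by rw [abs_mul, abs_of_nonneg hv0]
    set X := |c| * v0 - s * γ with hX
    have hX0 : 0 ≤ X := by simp [hX]; linarith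
    have h3 : X ≤ |c * v0 + y0| := by
      have h6 : |c * v0| ≤ |c * v0 + y0| + |y0| := by
        calc |c * v0| = |(c * v0 + y0) + (-y0)| := by ring_nf
          _ ≤ |c * v0 + y0| + |-y0| := abs_add_le _ _
          _ = |c * v0 + y0| + |y0| := by rw [abs_neg]
      rw [hcv] at h6
      linarith
    have h2 : X ^ 2 ≤ (c * v0 + y0) ^ 2 := by
      calc X ^ 2 ≤ |c * v0 + y0| ^ 2 := by nlinarith [abs_nonneg (c * v0 + y0)]
        _ = (c * v0 + y0) ^ 2 := sq_abs _
    have hP : 1 - γ ≤ s ^ 2 + X ^ 2 := by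
      have hexp : s ^ 2 + X ^ 2 = 1 - γ ^ 2 + 2 * s ^ 2 * γ ^ 2 - 2 * s * γ * (|c| * v0) := by
        rw [hX]; nlinarith [hca, e1, e2]
      rw [hexp]
      nlinarith [mul_le_mul_of_nonneg_left key hγ0]
    have h8 : Δ * X ^ 2 ≤ X ^ 2 := by nlinarith [sq_nonneg X]
    nlinarith [mul_le_mul_of_nonneg_left hP hΔ0]

lemma eps_bound (ε γ v0 : ℝ) (hε0 : 0 < ε) (hε1 : ε ≤ 1) (hγ0 : 0 ≤ γ)
    (hγsq : γ ^ 2 = 1 - v0 ^ 2) (hv0 : ε ≤ v0 ^ 2) : γ ≤ 1 - ε / 2 := by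
  nlinarith [sq_nonneg (γ - (1 - ε / 2)), sq_nonneg (γ + (1 - ε / 2))]

lemma final_comb (a Δ ε c v0 y0 γ s T : ℝ) (hΔ0 : 0 ≤ Δ)
    (hγle : γ ≤ 1 - ε / 2) (hssq : s ^ 2 = 1 - c ^ 2)
    (hkey : Δ * (1 - γ) ≤ Δ * s ^ 2 + (c * v0 + y0) ^ 2)
    (hT : a * c ^ 2 + (a + Δ) * (1 - c ^ 2) ≤ T) :
    a + Δ * (ε / 2) ≤ T + (c * v0 + y0) ^ 2 := by
  nlinarith [hkey, hT, hssq, mul_le_mul_of_nonneg_left hγle hΔ0]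

/-- Let `M = diag(1,0,…,0)` and let `H` be a real symmetric positive semidefinite
`(L+1)×(L+1)` matrix whose unique normalized ground state `v` (eigenvalue `a`) is
monotone non-increasing with positive entries, and whose spectral gap is at least `Δ`
(with `0 ≤ Δ ≤ 1`). Then the angle `θ` between the ground space of `H` and the ground
space of `M` (vectors with first coordinate `0`) satisfies
`cos θ ≤ √(1 - 1/(L+1))`, and consequently the smallest eigenvalue of `H + M` is at
least `a + (Δ/(L+1))·c` with the absolute constant `c = 1/2`. -/
theorem monotone_ground_state_angle_and_energy_shift (L : ℕ)
    (H M : Matrix (Fin (L + 1)) (Fin (L + 1)) ℝ)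
    (hM : M = Matrix.of fun (i j : Fin (L + 1)) => if i = 0 ∧ j = 0 then 1 else 0)
    (hHpsd : H.PosSemidef)
    (a Δ : ℝ) (hΔ0 : 0 ≤ Δ) (hΔ1 : Δ ≤ 1)
    (v : Fin (L + 1) → ℝ)
    (hvpos : ∀ i, 0 < v i)
    (hvmono : ∀ i j : Fin (L + 1), i ≤ j → v j ≤ v i)
    (hvnorm : ∑ i, v i ^ 2 = 1)
    (heig : H.mulVec v = a • v)
    (hground : ∀ x : Fin (L + 1) → ℝ, a * (∑ i, x i ^ 2) ≤ x ⬝ᵥ H.mulVec x)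
    (hgap : ∀ x : Fin (L + 1) → ℝ, v ⬝ᵥ x = 0 →
      (a + Δ) * (∑ i, x i ^ 2) ≤ x ⬝ᵥ H.mulVec x) :
    (∀ w : Fin (L + 1) → ℝ, w 0 = 0 → (∑ i, w i ^ 2) = 1 →
      |v ⬝ᵥ w| ≤ Real.sqrt (1 - 1 / (L + 1))) ∧
    (∀ x : Fin (L + 1) → ℝ, (∑ i, x i ^ 2) = 1 →
      a + Δ / (L + 1) * (1 / 2) ≤ x ⬝ᵥ (H + M).mulVec x) := by
  have hL : (0:ℝ) < (L:ℝ) + 1 := by positivity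
  set ε : ℝ := 1 / ((L:ℝ) + 1) with hε
  have hε0 : 0 < ε := by positivity
  have hε1 : ε ≤ 1 := by rw [hε]; rw [div_le_one hL]; linarith [Nat.cast_nonneg (α := ℝ) L]
  -- v 0 ^ 2 ≥ ε
  have hv0sq : ε ≤ v 0 ^ 2 := by
    have h1 : (1:ℝ) ≤ (L + 1 : ℝ) * v 0 ^ 2 := by
      calc (1:ℝ) = ∑ i, v i ^ 2 := hvnorm.symm
        _ ≤ ∑ _i : Fin (L+1), v 0 ^ 2 := by
            apply Finset.sum_le_sum
            intro i _
            have h2 := hvmono 0 i (Fin.zero_le i)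
            have h3 := (hvpos i).le
            nlinarith
        _ = (L + 1 : ℝ) * v 0 ^ 2 := by
            rw [Finset.sum_const, Finset.card_univ, Fintype.card_fin]
            push_cast; ring
    rw [hε, div_le_iff₀ hL]
    linarith
  have hv0le : v 0 ^ 2 ≤ 1 := by
    rw [← hvnorm]
    exact Finset.single_le_sum (fun i _ => sq_nonneg (v i)) (Finset.mem_univ 0)
  -- erase-0 sums for v
  have hverase : ∑ i ∈ Finset.univ.erase 0, v i ^ 2 = 1 - v 0 ^ 2 := by
    have := Finset.add_sum_erase Finset.univ (fun i => v i ^ 2) (Finset.mem_univ (0 : Fin (L+1)))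
    rw [hvnorm] at this
    linarith
  constructor
  · intro w hw0 hwnorm
    have hcs : (v ⬝ᵥ w) ^ 2 ≤ 1 - v 0 ^ 2 := by
      have hdot : v ⬝ᵥ w = ∑ i ∈ Finset.univ.erase 0, v i * w i := by
        have := Finset.add_sum_erase Finset.univ (fun i => v i * w i) (Finset.mem_univ (0 : Fin (L+1)))
        simp only [dotProduct]
        rw [← this, hw0]
        ring
      have hwe : ∑ i ∈ Finset.univ.erase 0, w i ^ 2 = 1 := by
        have := Finset.add_sum_erase Finset.univ (fun i => w i ^ 2) (Finset.mem_univ (0 : Fin (L+1)))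
        rw [hw0, hwnorm] at this
        simpa using this
      calc (v ⬝ᵥ w) ^ 2 = (∑ i ∈ Finset.univ.erase 0, v i * w i) ^ 2 := by rw [hdot]
        _ ≤ (∑ i ∈ Finset.univ.erase 0, v i ^ 2) * (∑ i ∈ Finset.univ.erase 0, w i ^ 2) :=
            Finset.sum_mul_sq_le_sq_mul_sq _ _ _
        _ = 1 - v 0 ^ 2 := by rw [hverase, hwe, mul_one]
    apply Real.abs_le_sqrt
    push_cast
    calc (v ⬝ᵥ w) ^ 2 ≤ 1 - v 0 ^ 2 := hcs
      _ ≤ 1 - 1 / ((L:ℝ) + 1) := by rw [hε] at hv0sq; linarith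
  · intro x hxnorm
    -- decomposition x = c • v + y
    set c : ℝ := v ⬝ᵥ x with hc
    set y : Fin (L+1) → ℝ := fun i => x i - c * v i with hy
    have hvv : v ⬝ᵥ v = 1 := by
      simp only [dotProduct, ← sq]
      exact hvnorm
    have hvy : v ⬝ᵥ y = 0 := by
      simp only [hy, dotProduct, mul_sub, Finset.sum_sub_distrib]
      have h1 : ∑ i, v i * (c * v i) = c * (v ⬝ᵥ v) := by
        simp only [dotProduct, Finset.mul_sum]
        apply Finset.sum_congr rfl
        intro i _
        ring
      rw [h1, hvv, mul_one, sub_eq_zero]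
      rfl
    have hsy : ∑ i, y i ^ 2 = 1 - c ^ 2 := by
      have h1 : ∀ i, y i ^ 2 = x i ^ 2 - 2 * c * (v i * x i) + c ^ 2 * v i ^ 2 := by
        intro i; simp only [hy]; ring
      simp only [h1]
      rw [Finset.sum_add_distrib, Finset.sum_sub_distrib, ← Finset.mul_sum, ← Finset.mul_sum]
      have h2 : ∑ i, v i * x i = c := by rw [hc]; rfl
      rw [h2, hxnorm, hvnorm]
      ring
    have hc2 : c ^ 2 ≤ 1 := by
      have := Finset.sum_nonneg (fun i (_ : i ∈ Finset.univ) => sq_nonneg (y i))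
      rw [hsy] at this
      linarith
    -- symmetry of H
    have hsym : Hᵀ = H := by
      have h := hHpsd.1
      rwa [Matrix.IsHermitian, Matrix.conjTranspose_eq_transpose_of_trivial] at h
    -- expansion of x over v, y
    have hxvy : x = c • v + y := by
      funext i
      simp [hy]
    have hHy : v ⬝ᵥ H.mulVec y = 0 := by
      rw [Matrix.dotProduct_mulVec, ← Matrix.mulVec_transpose, hsym, heig]
      simp [smul_dotProduct, hvy]
    have hyHv : y ⬝ᵥ H.mulVec v = 0 := by
      rw [heig, dotProduct_smul, dotProduct_comm, hvy]
      simp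
    have hvHv : v ⬝ᵥ H.mulVec v = a := by
      rw [heig, dotProduct_smul, hvv]
      simp
    have hyHy : (a + Δ) * (1 - c ^ 2) ≤ y ⬝ᵥ H.mulVec y := by
      have := hgap y hvy
      rwa [hsy] at this
    have hxHx : a * c ^ 2 + (a + Δ) * (1 - c ^ 2) ≤ x ⬝ᵥ H.mulVec x := by
      rw [hxvy]
      rw [Matrix.mulVec_add, Matrix.mulVec_smul, add_dotProduct, smul_dotProduct,
        dotProduct_add, dotProduct_add, dotProduct_smul,
        dotProduct_smul, hvHv, hHy, hyHv]
      simp only [smul_eq_mul, mul_zero, add_zero, zero_add, mul_one]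
      nlinarith [hyHy]
    -- M part
    have hMx : x ⬝ᵥ M.mulVec x = x 0 ^ 2 := by
      subst hM
      simp only [Matrix.mulVec, dotProduct, Matrix.of_apply, ite_and, ite_mul, one_mul,
        zero_mul]
      rw [Finset.sum_eq_single (0 : Fin (L+1))]
      · simp [Finset.sum_ite_eq, sq]
      · intro b _ hb
        simp [hb]
      · simp
    -- y 0 bound
    have hy0 : y 0 ^ 2 ≤ (1 - c ^ 2) * (1 - v 0 ^ 2) := by
      have hyerase : ∑ i ∈ Finset.univ.erase 0, y i ^ 2 = 1 - c ^ 2 - y 0 ^ 2 := by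
        have := Finset.add_sum_erase Finset.univ (fun i => y i ^ 2) (Finset.mem_univ (0 : Fin (L+1)))
        rw [hsy] at this
        linarith
      have hdot0 : v 0 * y 0 + ∑ i ∈ Finset.univ.erase 0, v i * y i = 0 := by
        have := Finset.add_sum_erase Finset.univ (fun i => v i * y i) (Finset.mem_univ (0 : Fin (L+1)))
        rw [show ∑ i, v i * y i = 0 from hvy] at this
        linarith
      have hCS : (∑ i ∈ Finset.univ.erase 0, v i * y i) ^ 2 ≤
          (1 - v 0 ^ 2) * (1 - c ^ 2 - y 0 ^ 2) := by
        calc (∑ i ∈ Finset.univ.erase 0, v i * y i) ^ 2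
            ≤ (∑ i ∈ Finset.univ.erase 0, v i ^ 2) * (∑ i ∈ Finset.univ.erase 0, y i ^ 2) :=
              Finset.sum_mul_sq_le_sq_mul_sq _ _ _
          _ = (1 - v 0 ^ 2) * (1 - c ^ 2 - y 0 ^ 2) := by rw [hverase, hyerase]
      have heq : (v 0 * y 0) ^ 2 = (∑ i ∈ Finset.univ.erase 0, v i * y i) ^ 2 := by
        have : v 0 * y 0 = -(∑ i ∈ Finset.univ.erase 0, v i * y i) := by linarith
        rw [this]; ring
      nlinarith [sq_nonneg (y 0), sq_nonneg (v 0), hv0le]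
    -- assemble
    have hx0 : x 0 = c * v 0 + y 0 := by simp [hy]
    -- apply key inequality
    set γ : ℝ := Real.sqrt (1 - v 0 ^ 2) with hγ
    set s : ℝ := Real.sqrt (1 - c ^ 2) with hs
    have hγ0 : 0 ≤ γ := Real.sqrt_nonneg _
    have hs0 : 0 ≤ s := Real.sqrt_nonneg _
    have hγsq : γ ^ 2 = 1 - v 0 ^ 2 := Real.sq_sqrt (by linarith)
    have hssq : s ^ 2 = 1 - c ^ 2 := Real.sq_sqrt (by linarith)
    have hkey := key_ineq Δ γ c (v 0) (y 0) s hΔ0 hΔ1 hγ0 hs0 (hvpos 0).le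
      (by rw [hγsq]; ring) (by rw [hssq]; ring) (by rw [hγsq, hssq]; linarith [hy0])
    clear_value ε c y γ s
    -- γ ≤ 1 - ε/2
    have hγle : γ ≤ 1 - ε / 2 :=
      eps_bound ε γ (v 0) hε0 hε1 hγ0 hγsq hv0sq
    -- final assembly
    rw [Matrix.add_mulVec, dotProduct_add, hMx, hx0]
    have hgoal : a + Δ / ((L:ℝ) + 1) * (1 / 2) = a + Δ * (ε / 2) := by rw [hε]; ring
    rw [hgoal]
    exact final_comb a Δ ε c (v 0) (y 0) γ s _ hΔ0 hγle hssq hkey hxHx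
end
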